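/- arXiv:2211.09759 — 8 statements merged into one kernel-verified Lean document; each statement's English description precedes it below -/
import Mathlib

section
/- For all smooth functions τ¹, τ² : ℝ → ℝ, the Lie bracket of the vector fields Dᵗ(τ¹) and Dᵗ(τ²) satisfies [Dᵗ(τ¹), Dᵗ(τ²)] = Dᵗ(τ¹·(τ²)' − (τ¹)'·τ²), as an equality of maps ℝ⁴ → ℝ⁴. -/
/-- The Lie bracket of two vector fields on `ℝ⁴`, `[X,Y](p) = DY(p)(X(p)) − DX(p)(Y(p))`. -/
noncomputable def lieBracket (X Y : ℝ × ℝ × ℝ × ℝ → ℝ × ℝ × ℝ × ℝ) :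
    ℝ × ℝ × ℝ × ℝ → ℝ × ℝ × ℝ × ℝ :=
  fun p => fderiv ℝ Y p (X p) - fderiv ℝ X p (Y p)

/-- `Dᵗ(τ)(t,x,y,u) = (τ(t), τ'(t)x/3, τ'(t)y/3, −τ''(t)(x³+y³)/18)`. -/
noncomputable def Dt (τ : ℝ → ℝ) : ℝ × ℝ × ℝ × ℝ → ℝ × ℝ × ℝ × ℝ :=
  fun p => (τ p.1, deriv τ p.1 * p.2.1 / 3, deriv τ p.1 * p.2.2.1 / 3,
    -deriv (deriv τ) p.1 * (p.2.1 ^ 3 + p.2.2.1 ^ 3) / 18)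

/-- `Dˢ(t,x,y,u) = (0, x, y, 3u)`. -/
noncomputable def Ds : ℝ × ℝ × ℝ × ℝ → ℝ × ℝ × ℝ × ℝ :=
  fun p => (0, p.2.1, p.2.2.1, 3 * p.2.2.2)

/-- `Pˣ(χ)(t,x,y,u) = (0, χ(t), 0, −χ'(t)x²/2)`. -/
noncomputable def Px (χ : ℝ → ℝ) : ℝ × ℝ × ℝ × ℝ → ℝ × ℝ × ℝ × ℝ :=
  fun p => (0, χ p.1, 0, -deriv χ p.1 * p.2.1 ^ 2 / 2)

/-- `Pʸ(ρ)(t,x,y,u) = (0, 0, ρ(t), −ρ'(t)y²/2)`. -/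
noncomputable def Py (ρ : ℝ → ℝ) : ℝ × ℝ × ℝ × ℝ → ℝ × ℝ × ℝ × ℝ :=
  fun p => (0, 0, ρ p.1, -deriv ρ p.1 * p.2.2.1 ^ 2 / 2)

/-- `Rˣ(α)(t,x,y,u) = (0,0,0, α(t)x)`. -/
noncomputable def Rx (α : ℝ → ℝ) : ℝ × ℝ × ℝ × ℝ → ℝ × ℝ × ℝ × ℝ :=
  fun p => (0, 0, 0, α p.1 * p.2.1)

/-- `Rʸ(β)(t,x,y,u) = (0,0,0, β(t)y)`. -/
noncomputable def Ry (β : ℝ → ℝ) : ℝ × ℝ × ℝ × ℝ → ℝ × ℝ × ℝ × ℝ :=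
  fun p => (0, 0, 0, β p.1 * p.2.2.1)

/-- `Z(σ)(t,x,y,u) = (0,0,0, σ(t))`. -/
noncomputable def Zf (σ : ℝ → ℝ) : ℝ × ℝ × ℝ × ℝ → ℝ × ℝ × ℝ × ℝ :=
  fun p => (0, 0, 0, σ p.1)

lemma fderiv_Dt_apply (τ : ℝ → ℝ) (h : ContDiff ℝ (⊤ : ℕ∞) τ) (p v : ℝ × ℝ × ℝ × ℝ) :
    fderiv ℝ (Dt τ) p v =
      (deriv τ p.1 * v.1,
       (deriv (deriv τ) p.1 * v.1 * p.2.1 + deriv τ p.1 * v.2.1) / 3,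
       (deriv (deriv τ) p.1 * v.1 * p.2.2.1 + deriv τ p.1 * v.2.2.1) / 3,
       -(deriv (deriv (deriv τ)) p.1 * v.1 * (p.2.1 ^ 3 + p.2.2.1 ^ 3)
         + deriv (deriv τ) p.1 * (3 * p.2.1 ^ 2 * v.2.1 + 3 * p.2.2.1 ^ 2 * v.2.2.1)) / 18) := by
  have h0 : ContDiff ℝ (⊤ : ℕ∞) τ := h.of_le (by simp)
  have hd1 : ContDiff ℝ (⊤ : ℕ∞) (deriv τ) := (contDiff_infty_iff_deriv.mp h0).2
  have hd2 : ContDiff ℝ (⊤ : ℕ∞) (deriv (deriv τ)) := (contDiff_infty_iff_deriv.mp hd1).2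
  have h_t : HasFDerivAt (fun p : ℝ × ℝ × ℝ × ℝ => p.1)
      (ContinuousLinearMap.fst ℝ ℝ (ℝ × ℝ × ℝ)) p := hasFDerivAt_fst
  have h_x : HasFDerivAt (fun p : ℝ × ℝ × ℝ × ℝ => p.2.1)
      ((ContinuousLinearMap.fst ℝ ℝ (ℝ × ℝ)).comp (ContinuousLinearMap.snd ℝ ℝ (ℝ × ℝ × ℝ))) p :=
    hasFDerivAt_fst.comp p hasFDerivAt_snd
  have h_y : HasFDerivAt (fun p : ℝ × ℝ × ℝ × ℝ => p.2.2.1)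
      (((ContinuousLinearMap.fst ℝ ℝ ℝ).comp (ContinuousLinearMap.snd ℝ ℝ (ℝ × ℝ))).comp
        (ContinuousLinearMap.snd ℝ ℝ (ℝ × ℝ × ℝ))) p :=
    (hasFDerivAt_fst.comp p.2 hasFDerivAt_snd).comp p hasFDerivAt_snd
  have hτ : HasFDerivAt (fun p : ℝ × ℝ × ℝ × ℝ => τ p.1)
      (((1 : ℝ →L[ℝ] ℝ).smulRight (deriv τ p.1)).comp (ContinuousLinearMap.fst ℝ ℝ (ℝ × ℝ × ℝ))) p :=
    ((h0.differentiable (by simp) p.1).hasDerivAt.hasFDerivAt).comp p h_t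
  have hτ' : HasFDerivAt (fun p : ℝ × ℝ × ℝ × ℝ => deriv τ p.1)
      (((1 : ℝ →L[ℝ] ℝ).smulRight (deriv (deriv τ) p.1)).comp (ContinuousLinearMap.fst ℝ ℝ (ℝ × ℝ × ℝ))) p :=
    ((hd1.differentiable (by simp) p.1).hasDerivAt.hasFDerivAt).comp p h_t
  have hτ'' : HasFDerivAt (fun p : ℝ × ℝ × ℝ × ℝ => deriv (deriv τ) p.1)
      (((1 : ℝ →L[ℝ] ℝ).smulRight (deriv (deriv (deriv τ)) p.1)).comp (ContinuousLinearMap.fst ℝ ℝ (ℝ × ℝ × ℝ))) p :=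
    ((hd2.differentiable (by simp) p.1).hasDerivAt.hasFDerivAt).comp p h_t
  have hA := (hasDerivAt_pow 3 p.2.1).comp_hasFDerivAt p h_x
  have hB := (hasDerivAt_pow 3 p.2.2.1).comp_hasFDerivAt p h_y
  have H : HasFDerivAt (Dt τ) _ p :=
    hτ.prodMk (((hτ'.fun_mul h_x).mul_const (3:ℝ)⁻¹).prodMk (((hτ'.fun_mul h_y).mul_const (3:ℝ)⁻¹).prodMk
      (((hτ''.fun_neg.fun_mul (hA.fun_add hB)).mul_const (18:ℝ)⁻¹))))
  rw [H.fderiv]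
  simp [ContinuousLinearMap.prod_apply, ContinuousLinearMap.comp_apply,
    ContinuousLinearMap.smulRight_apply, smul_eq_mul]
  ring_nf
  trivial

theorem bracket_Dt_Dt (τ1 τ2 : ℝ → ℝ) (h1 : ContDiff ℝ (⊤ : ℕ∞) τ1) (h2 : ContDiff ℝ (⊤ : ℕ∞) τ2) :
    lieBracket (Dt τ1) (Dt τ2)
      = Dt (fun t => τ1 t * deriv τ2 t - deriv τ1 t * τ2 t) := by
  have h10 : ContDiff ℝ (⊤ : ℕ∞) τ1 := h1.of_le (by simp)
  have h20 : ContDiff ℝ (⊤ : ℕ∞) τ2 := h2.of_le (by simp)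
  have h1d : ContDiff ℝ (⊤ : ℕ∞) (deriv τ1) := (contDiff_infty_iff_deriv.mp h10).2
  have h2d : ContDiff ℝ (⊤ : ℕ∞) (deriv τ2) := (contDiff_infty_iff_deriv.mp h20).2
  have h1dd : ContDiff ℝ (⊤ : ℕ∞) (deriv (deriv τ1)) := (contDiff_infty_iff_deriv.mp h1d).2
  have h2dd : ContDiff ℝ (⊤ : ℕ∞) (deriv (deriv τ2)) := (contDiff_infty_iff_deriv.mp h2d).2
  have D1 : Differentiable ℝ τ1 := h10.differentiable (by simp)
  have D2 : Differentiable ℝ τ2 := h20.differentiable (by simp)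
  have D1d : Differentiable ℝ (deriv τ1) := h1d.differentiable (by simp)
  have D2d : Differentiable ℝ (deriv τ2) := h2d.differentiable (by simp)
  have D1dd : Differentiable ℝ (deriv (deriv τ1)) := h1dd.differentiable (by simp)
  have D2dd : Differentiable ℝ (deriv (deriv τ2)) := h2dd.differentiable (by simp)
  have dF : deriv (fun t => τ1 t * deriv τ2 t - deriv τ1 t * τ2 t)
      = fun t => τ1 t * deriv (deriv τ2) t - deriv (deriv τ1) t * τ2 t := by
    funext t
    rw [deriv_fun_sub ((D1 t).fun_mul (D2d t)) ((D1d t).fun_mul (D2 t)),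
      deriv_fun_mul (D1 t) (D2d t), deriv_fun_mul (D1d t) (D2 t)]
    ring
  have dF2 : deriv (fun t => τ1 t * deriv (deriv τ2) t - deriv (deriv τ1) t * τ2 t)
      = fun t => deriv τ1 t * deriv (deriv τ2) t + τ1 t * deriv (deriv (deriv τ2)) t
        - deriv (deriv (deriv τ1)) t * τ2 t - deriv (deriv τ1) t * deriv τ2 t := by
    funext t
    rw [deriv_fun_sub ((D1 t).fun_mul (D2dd t)) ((D1dd t).fun_mul (D2 t)),
      deriv_fun_mul (D1 t) (D2dd t), deriv_fun_mul (D1dd t) (D2 t)]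
    ring
  funext p
  simp only [lieBracket]
  rw [fderiv_Dt_apply τ2 h2 p (Dt τ1 p), fderiv_Dt_apply τ1 h1 p (Dt τ2 p)]
  simp only [Dt, dF, dF2, Prod.mk_sub_mk]
  refine Prod.ext (by ring) (Prod.ext (by ring) (Prod.ext (by ring) (by ring)))
end

section
/- For all smooth functions τ, χ, ρ : ℝ → ℝ, the Lie brackets satisfy [Dᵗ(τ), Pˣ(χ)] = Pˣ(τχ' − (1/3)τ'χ) and [Dᵗ(τ), Pʸ(ρ)] = Pʸ(τρ' − (1/3)τ'ρ), as equalities of maps ℝ⁴ → ℝ⁴. -/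
section aux

open ContinuousLinearMap

private lemma hasDerivAt_of_contDiff {g : ℝ → ℝ} (hg : ContDiff ℝ (⊤:ℕ∞) g) (t : ℝ) :
    HasDerivAt g (deriv g t) t :=
  (hg.differentiable (by simp) t).hasDerivAt

private lemma contDiff_deriv {g : ℝ → ℝ} (hg : ContDiff ℝ (⊤:ℕ∞) g) :
    ContDiff ℝ (⊤:ℕ∞) (deriv g) :=
  (contDiff_infty_iff_deriv.mp hg).2

private lemma hasF_t {g : ℝ → ℝ} (hg : ContDiff ℝ (⊤:ℕ∞) g) (p : ℝ × ℝ × ℝ × ℝ) :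
    HasFDerivAt (fun q : ℝ × ℝ × ℝ × ℝ => g q.1)
      (deriv g p.1 • ContinuousLinearMap.fst ℝ ℝ (ℝ × ℝ × ℝ)) p :=
  (hasDerivAt_of_contDiff hg p.1).comp_hasFDerivAt p hasFDerivAt_fst

private lemma hasF_x (p : ℝ × ℝ × ℝ × ℝ) :
    HasFDerivAt (fun q : ℝ × ℝ × ℝ × ℝ => q.2.1)
      ((ContinuousLinearMap.fst ℝ ℝ (ℝ × ℝ)).comp
        (ContinuousLinearMap.snd ℝ ℝ (ℝ × ℝ × ℝ))) p :=
  hasFDerivAt_fst.comp p hasFDerivAt_snd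

private lemma hasF_y (p : ℝ × ℝ × ℝ × ℝ) :
    HasFDerivAt (fun q : ℝ × ℝ × ℝ × ℝ => q.2.2.1)
      ((ContinuousLinearMap.fst ℝ ℝ ℝ).comp
        ((ContinuousLinearMap.snd ℝ ℝ (ℝ × ℝ)).comp
          (ContinuousLinearMap.snd ℝ ℝ (ℝ × ℝ × ℝ)))) p :=
  hasFDerivAt_fst.comp p (hasFDerivAt_snd.comp p hasFDerivAt_snd)

end aux

theorem bracket_Dt_Px_Py (τ χ ρ : ℝ → ℝ) (hτ : ContDiff ℝ (⊤ : ℕ∞) τ) (hχ : ContDiff ℝ (⊤ : ℕ∞) χ)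
    (hρ : ContDiff ℝ (⊤ : ℕ∞) ρ) :
    lieBracket (Dt τ) (Px χ) = Px (fun t => τ t * deriv χ t - deriv τ t * χ t / 3) ∧
    lieBracket (Dt τ) (Py ρ) = Py (fun t => τ t * deriv ρ t - deriv τ t * ρ t / 3) := by
  have hτi : ContDiff ℝ (⊤:ℕ∞) τ := hτ.of_le (by simp)
  have hχi : ContDiff ℝ (⊤:ℕ∞) χ := hχ.of_le (by simp)
  have hρi : ContDiff ℝ (⊤:ℕ∞) ρ := hρ.of_le (by simp)
  have hτ' := contDiff_deriv hτi
  have hτ'' := contDiff_deriv hτ'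
  have hχ' := contDiff_deriv hχi
  have hρ' := contDiff_deriv hρi
  constructor
  · funext p
    have hD1 := hasF_t hτi p
    have hD2 := HasFDerivAt.mul_const ((hasF_t hτ' p).mul (hasF_x p)) ((3:ℝ)⁻¹)
    have hD3 := HasFDerivAt.mul_const ((hasF_t hτ' p).mul (hasF_y p)) ((3:ℝ)⁻¹)
    have hD4 := HasFDerivAt.mul_const ((hasF_t hτ'' p).neg.mul
      (((hasDerivAt_pow 3 p.2.1).comp_hasFDerivAt p (hasF_x p)).add
        ((hasDerivAt_pow 3 p.2.2.1).comp_hasFDerivAt p (hasF_y p)))) ((18:ℝ)⁻¹)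
    have hD' : HasFDerivAt (Dt τ) _ p := HasFDerivAt.prodMk hD1 (HasFDerivAt.prodMk hD2 (HasFDerivAt.prodMk hD3 hD4))
    have hP4 := HasFDerivAt.mul_const
      ((hasF_t hχ' p).neg.mul ((hasDerivAt_pow 2 p.2.1).comp_hasFDerivAt p (hasF_x p))) ((2:ℝ)⁻¹)
    have hP' : HasFDerivAt (Px χ) _ p :=
      HasFDerivAt.prodMk (hasFDerivAt_const (0:ℝ) p) (HasFDerivAt.prodMk (hasF_t hχi p) (HasFDerivAt.prodMk (hasFDerivAt_const (0:ℝ) p) hP4))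
    have hσ := ((hasDerivAt_of_contDiff hτi p.1).mul (hasDerivAt_of_contDiff hχ' p.1)).sub
      (((hasDerivAt_of_contDiff hτ' p.1).mul (hasDerivAt_of_contDiff hχi p.1)).div_const 3)
    simp only [lieBracket]
    rw [hP'.fderiv, hD'.fderiv]
    simp only [Dt, Px]
    rw [HasDerivAt.deriv (f := fun t => τ t * deriv χ t - deriv τ t * χ t / 3) hσ]
    simp only [ContinuousLinearMap.prod_apply, ContinuousLinearMap.add_apply,
      ContinuousLinearMap.smul_apply, ContinuousLinearMap.coe_comp', Function.comp,
      ContinuousLinearMap.coe_fst', ContinuousLinearMap.coe_snd',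
      ContinuousLinearMap.neg_apply, ContinuousLinearMap.zero_apply, smul_eq_mul,
      Prod.mk_sub_mk, Prod.mk.injEq, Pi.neg_apply]
    refine ⟨by ring, by ring, by ring, by ring⟩
  · funext p
    have hD1 := hasF_t hτi p
    have hD2 := HasFDerivAt.mul_const ((hasF_t hτ' p).mul (hasF_x p)) ((3:ℝ)⁻¹)
    have hD3 := HasFDerivAt.mul_const ((hasF_t hτ' p).mul (hasF_y p)) ((3:ℝ)⁻¹)
    have hD4 := HasFDerivAt.mul_const ((hasF_t hτ'' p).neg.mul
      (((hasDerivAt_pow 3 p.2.1).comp_hasFDerivAt p (hasF_x p)).add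
        ((hasDerivAt_pow 3 p.2.2.1).comp_hasFDerivAt p (hasF_y p)))) ((18:ℝ)⁻¹)
    have hD' : HasFDerivAt (Dt τ) _ p := HasFDerivAt.prodMk hD1 (HasFDerivAt.prodMk hD2 (HasFDerivAt.prodMk hD3 hD4))
    have hP4 := HasFDerivAt.mul_const
      ((hasF_t hρ' p).neg.mul ((hasDerivAt_pow 2 p.2.2.1).comp_hasFDerivAt p (hasF_y p))) ((2:ℝ)⁻¹)
    have hP' : HasFDerivAt (Py ρ) _ p :=
      HasFDerivAt.prodMk (hasFDerivAt_const (0:ℝ) p) (HasFDerivAt.prodMk (hasFDerivAt_const (0:ℝ) p) (HasFDerivAt.prodMk (hasF_t hρi p) hP4))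
    have hσ := ((hasDerivAt_of_contDiff hτi p.1).mul (hasDerivAt_of_contDiff hρ' p.1)).sub
      (((hasDerivAt_of_contDiff hτ' p.1).mul (hasDerivAt_of_contDiff hρi p.1)).div_const 3)
    simp only [lieBracket]
    rw [hP'.fderiv, hD'.fderiv]
    simp only [Dt, Py]
    rw [HasDerivAt.deriv (f := fun t => τ t * deriv ρ t - deriv τ t * ρ t / 3) hσ]
    simp only [ContinuousLinearMap.prod_apply, ContinuousLinearMap.add_apply,
      ContinuousLinearMap.smul_apply, ContinuousLinearMap.coe_comp', Function.comp,
      ContinuousLinearMap.coe_fst', ContinuousLinearMap.coe_snd',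
      ContinuousLinearMap.neg_apply, ContinuousLinearMap.zero_apply, smul_eq_mul,
      Prod.mk_sub_mk, Prod.mk.injEq, Pi.neg_apply]
    refine ⟨by ring, by ring, by ring, by ring⟩
end

section
/- For all smooth functions χ, ρ, α, β, σ : ℝ → ℝ, the Lie brackets with the scaling field Dˢ satisfy [Dˢ, Pˣ(χ)] = −Pˣ(χ), [Dˢ, Pʸ(ρ)] = −Pʸ(ρ), [Dˢ, Rˣ(α)] = −2Rˣ(α), [Dˢ, Rʸ(β)] = −2Rʸ(β), and [Dˢ, Z(σ)] = −3Z(σ), as equalities of maps ℝ⁴ → ℝ⁴. -/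
abbrev E4 := ℝ × ℝ × ℝ × ℝ

noncomputable def pi1 : E4 →L[ℝ] ℝ := ContinuousLinearMap.fst ℝ ℝ (ℝ × ℝ × ℝ)
noncomputable def pi2 : E4 →L[ℝ] ℝ :=
  (ContinuousLinearMap.fst ℝ ℝ (ℝ × ℝ)).comp (ContinuousLinearMap.snd ℝ ℝ (ℝ × ℝ × ℝ))
noncomputable def pi3 : E4 →L[ℝ] ℝ :=
  ((ContinuousLinearMap.fst ℝ ℝ ℝ).comp (ContinuousLinearMap.snd ℝ ℝ (ℝ × ℝ))).comp
    (ContinuousLinearMap.snd ℝ ℝ (ℝ × ℝ × ℝ))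
noncomputable def pi4 : E4 →L[ℝ] ℝ :=
  ((ContinuousLinearMap.snd ℝ ℝ ℝ).comp (ContinuousLinearMap.snd ℝ ℝ (ℝ × ℝ))).comp
    (ContinuousLinearMap.snd ℝ ℝ (ℝ × ℝ × ℝ))

lemma hasFDerivAt_Ds (p : E4) :
    HasFDerivAt Ds ((0 : E4 →L[ℝ] ℝ).prod (pi2.prod (pi3.prod ((3:ℝ) • pi4)))) p := by
  have h1 : HasFDerivAt (fun _ : E4 => (0:ℝ)) (0 : E4 →L[ℝ] ℝ) p := hasFDerivAt_const _ _
  have h2 : HasFDerivAt (fun p : E4 => p.2.1) pi2 p := pi2.hasFDerivAt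
  have h3 : HasFDerivAt (fun p : E4 => p.2.2.1) pi3 p := pi3.hasFDerivAt
  have h4 : HasFDerivAt (fun p : E4 => 3 * p.2.2.2) ((3:ℝ) • pi4) p := by
    exact pi4.hasFDerivAt.const_mul (3:ℝ)
  exact h1.prodMk (h2.prodMk (h3.prodMk h4))

lemma fderiv_Ds_apply (p v : E4) : fderiv ℝ Ds p v = (0, v.2.1, v.2.2.1, 3 * v.2.2.2) := by
  rw [(hasFDerivAt_Ds p).fderiv]
  simp [pi2, pi3, pi4]

lemma hasDerivAt_of_contDiff_s3 {f : ℝ → ℝ} (hf : ContDiff ℝ ((⊤:ℕ∞):WithTop ℕ∞) f) (t : ℝ) :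
    HasDerivAt f (deriv f t) t := (hf.contDiffAt.differentiableAt (by simp)).hasDerivAt

lemma fderiv_Px_apply (χ : ℝ → ℝ) (hχ : ContDiff ℝ (⊤ : ℕ∞) χ) (p v : E4) :
    fderiv ℝ (Px χ) p v = (0, deriv χ p.1 * v.1, 0,
      -(deriv (deriv χ) p.1 * v.1) * p.2.1 ^ 2 / 2 +
        -deriv χ p.1 * (2 * p.2.1 * v.2.1) / 2) := by
  have hχ2 : ContDiff ℝ ((⊤:ℕ∞):WithTop ℕ∞) χ := hχ.of_le (by simp)
  have hχ' : ContDiff ℝ ((⊤:ℕ∞):WithTop ℕ∞) (deriv χ) := (contDiff_infty_iff_deriv.1 hχ2).2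
  have h1 : HasFDerivAt (fun _ : E4 => (0:ℝ)) (0 : E4 →L[ℝ] ℝ) p := hasFDerivAt_const _ _
  have h2 : HasFDerivAt (fun p : E4 => χ p.1) (deriv χ p.1 • pi1) p :=
    (hasDerivAt_of_contDiff_s3 hχ2 p.1).comp_hasFDerivAt p pi1.hasFDerivAt
  have hc : HasFDerivAt (fun p : E4 => deriv χ p.1) (deriv (deriv χ) p.1 • pi1) p :=
    (hasDerivAt_of_contDiff_s3 hχ' p.1).comp_hasFDerivAt p pi1.hasFDerivAt
  have hx : HasFDerivAt (fun p : E4 => p.2.1) pi2 p := pi2.hasFDerivAt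
  have h4 : HasFDerivAt (fun p : E4 => (-(1/2) : ℝ) * (deriv χ p.1 * (p.2.1 * p.2.1)))
      ((-(1/2) : ℝ) • (deriv χ p.1 • (p.2.1 • pi2 + p.2.1 • pi2) +
        (p.2.1 * p.2.1) • (deriv (deriv χ) p.1 • pi1))) p :=
    HasFDerivAt.const_mul (𝕜 := ℝ) (HasFDerivAt.mul (𝕜 := ℝ) hc (HasFDerivAt.mul (𝕜 := ℝ) hx hx)) (-(1/2))
  have hfe : (fun p : E4 => -deriv χ p.1 * p.2.1 ^ 2 / 2)
      = fun p : E4 => (-(1/2) : ℝ) * (deriv χ p.1 * (p.2.1 * p.2.1)) := by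
    funext q; ring
  have h4' : HasFDerivAt (fun p : E4 => -deriv χ p.1 * p.2.1 ^ 2 / 2)
      ((-(1/2) : ℝ) • (deriv χ p.1 • (p.2.1 • pi2 + p.2.1 • pi2) +
        (p.2.1 * p.2.1) • (deriv (deriv χ) p.1 • pi1))) p := by
    rw [hfe]; exact h4
  have heq : HasFDerivAt (Px χ)
      ((0 : E4 →L[ℝ] ℝ).prod ((deriv χ p.1 • pi1).prod ((0 : E4 →L[ℝ] ℝ).prod
        ((-(1/2) : ℝ) • (deriv χ p.1 • (p.2.1 • pi2 + p.2.1 • pi2) +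
        (p.2.1 * p.2.1) • (deriv (deriv χ) p.1 • pi1)))))) p := h1.prodMk (h2.prodMk (h1.prodMk h4'))
  rw [heq.fderiv]
  simp [pi1, pi2]
  ring

lemma fderiv_Py_apply (ρ : ℝ → ℝ) (hρ : ContDiff ℝ (⊤ : ℕ∞) ρ) (p v : E4) :
    fderiv ℝ (Py ρ) p v = (0, 0, deriv ρ p.1 * v.1,
      (-(1/2) : ℝ) * (deriv ρ p.1 * (p.2.2.1 * v.2.2.1 + p.2.2.1 * v.2.2.1) +
        (p.2.2.1 * p.2.2.1) * (deriv (deriv ρ) p.1 * v.1))) := by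
  have hρ2 : ContDiff ℝ ((⊤:ℕ∞):WithTop ℕ∞) ρ := hρ.of_le (by simp)
  have hρ' : ContDiff ℝ ((⊤:ℕ∞):WithTop ℕ∞) (deriv ρ) := (contDiff_infty_iff_deriv.1 hρ2).2
  have h1 : HasFDerivAt (fun _ : E4 => (0:ℝ)) (0 : E4 →L[ℝ] ℝ) p := hasFDerivAt_const _ _
  have h2 : HasFDerivAt (fun p : E4 => ρ p.1) (deriv ρ p.1 • pi1) p :=
    (hasDerivAt_of_contDiff_s3 hρ2 p.1).comp_hasFDerivAt p pi1.hasFDerivAt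
  have hc : HasFDerivAt (fun p : E4 => deriv ρ p.1) (deriv (deriv ρ) p.1 • pi1) p :=
    (hasDerivAt_of_contDiff_s3 hρ' p.1).comp_hasFDerivAt p pi1.hasFDerivAt
  have hy : HasFDerivAt (fun p : E4 => p.2.2.1) pi3 p := pi3.hasFDerivAt
  have h4 : HasFDerivAt (fun p : E4 => (-(1/2) : ℝ) * (deriv ρ p.1 * (p.2.2.1 * p.2.2.1)))
      ((-(1/2) : ℝ) • (deriv ρ p.1 • (p.2.2.1 • pi3 + p.2.2.1 • pi3) +
        (p.2.2.1 * p.2.2.1) • (deriv (deriv ρ) p.1 • pi1))) p :=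
    (hc.mul (hy.mul hy)).const_mul _
  have hfe : (fun p : E4 => -deriv ρ p.1 * p.2.2.1 ^ 2 / 2)
      = fun p : E4 => (-(1/2) : ℝ) * (deriv ρ p.1 * (p.2.2.1 * p.2.2.1)) := by
    funext q; ring
  have h4' : HasFDerivAt (fun p : E4 => -deriv ρ p.1 * p.2.2.1 ^ 2 / 2)
      ((-(1/2) : ℝ) • (deriv ρ p.1 • (p.2.2.1 • pi3 + p.2.2.1 • pi3) +
        (p.2.2.1 * p.2.2.1) • (deriv (deriv ρ) p.1 • pi1))) p := by
    rw [hfe]; exact h4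
  have heq : HasFDerivAt (Py ρ)
      ((0 : E4 →L[ℝ] ℝ).prod ((0 : E4 →L[ℝ] ℝ).prod ((deriv ρ p.1 • pi1).prod
        ((-(1/2) : ℝ) • (deriv ρ p.1 • (p.2.2.1 • pi3 + p.2.2.1 • pi3) +
          (p.2.2.1 * p.2.2.1) • (deriv (deriv ρ) p.1 • pi1)))))) p :=
    h1.prodMk (h1.prodMk (h2.prodMk h4'))
  rw [heq.fderiv]
  simp [pi1, pi3]
  ring

lemma fderiv_Rx_apply (α : ℝ → ℝ) (hα : ContDiff ℝ (⊤ : ℕ∞) α) (p v : E4) :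
    fderiv ℝ (Rx α) p v = (0, 0, 0, α p.1 * v.2.1 + p.2.1 * (deriv α p.1 * v.1)) := by
  have hα2 : ContDiff ℝ ((⊤:ℕ∞):WithTop ℕ∞) α := hα.of_le (by simp)
  have h1 : HasFDerivAt (fun _ : E4 => (0:ℝ)) (0 : E4 →L[ℝ] ℝ) p := hasFDerivAt_const _ _
  have hA : HasFDerivAt (fun p : E4 => α p.1) (deriv α p.1 • pi1) p :=
    (hasDerivAt_of_contDiff_s3 hα2 p.1).comp_hasFDerivAt p pi1.hasFDerivAt
  have hx : HasFDerivAt (fun p : E4 => p.2.1) pi2 p := pi2.hasFDerivAt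
  have h4 : HasFDerivAt (fun p : E4 => α p.1 * p.2.1)
      (α p.1 • pi2 + p.2.1 • (deriv α p.1 • pi1)) p := hA.mul hx
  have heq : HasFDerivAt (Rx α)
      ((0 : E4 →L[ℝ] ℝ).prod ((0 : E4 →L[ℝ] ℝ).prod ((0 : E4 →L[ℝ] ℝ).prod
        (α p.1 • pi2 + p.2.1 • (deriv α p.1 • pi1))))) p :=
    h1.prodMk (h1.prodMk (h1.prodMk h4))
  rw [heq.fderiv]
  simp [pi1, pi2]

lemma fderiv_Ry_apply (β : ℝ → ℝ) (hβ : ContDiff ℝ (⊤ : ℕ∞) β) (p v : E4) :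
    fderiv ℝ (Ry β) p v = (0, 0, 0, β p.1 * v.2.2.1 + p.2.2.1 * (deriv β p.1 * v.1)) := by
  have hβ2 : ContDiff ℝ ((⊤:ℕ∞):WithTop ℕ∞) β := hβ.of_le (by simp)
  have h1 : HasFDerivAt (fun _ : E4 => (0:ℝ)) (0 : E4 →L[ℝ] ℝ) p := hasFDerivAt_const _ _
  have hB : HasFDerivAt (fun p : E4 => β p.1) (deriv β p.1 • pi1) p :=
    (hasDerivAt_of_contDiff_s3 hβ2 p.1).comp_hasFDerivAt p pi1.hasFDerivAt
  have hy : HasFDerivAt (fun p : E4 => p.2.2.1) pi3 p := pi3.hasFDerivAt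
  have h4 : HasFDerivAt (fun p : E4 => β p.1 * p.2.2.1)
      (β p.1 • pi3 + p.2.2.1 • (deriv β p.1 • pi1)) p := hB.mul hy
  have heq : HasFDerivAt (Ry β)
      ((0 : E4 →L[ℝ] ℝ).prod ((0 : E4 →L[ℝ] ℝ).prod ((0 : E4 →L[ℝ] ℝ).prod
        (β p.1 • pi3 + p.2.2.1 • (deriv β p.1 • pi1))))) p :=
    h1.prodMk (h1.prodMk (h1.prodMk h4))
  rw [heq.fderiv]
  simp [pi1, pi3]

lemma fderiv_Zf_apply (σ : ℝ → ℝ) (hσ : ContDiff ℝ (⊤ : ℕ∞) σ) (p v : E4) :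
    fderiv ℝ (Zf σ) p v = (0, 0, 0, deriv σ p.1 * v.1) := by
  have hσ2 : ContDiff ℝ ((⊤:ℕ∞):WithTop ℕ∞) σ := hσ.of_le (by simp)
  have h1 : HasFDerivAt (fun _ : E4 => (0:ℝ)) (0 : E4 →L[ℝ] ℝ) p := hasFDerivAt_const _ _
  have hS : HasFDerivAt (fun p : E4 => σ p.1) (deriv σ p.1 • pi1) p :=
    (hasDerivAt_of_contDiff_s3 hσ2 p.1).comp_hasFDerivAt p pi1.hasFDerivAt
  have heq : HasFDerivAt (Zf σ)
      ((0 : E4 →L[ℝ] ℝ).prod ((0 : E4 →L[ℝ] ℝ).prod ((0 : E4 →L[ℝ] ℝ).prod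
        (deriv σ p.1 • pi1)))) p :=
    h1.prodMk (h1.prodMk (h1.prodMk hS))
  rw [heq.fderiv]
  simp [pi1]

theorem bracket_Ds (χ ρ α β σ : ℝ → ℝ) (hχ : ContDiff ℝ (⊤ : ℕ∞) χ) (hρ : ContDiff ℝ (⊤ : ℕ∞) ρ)
    (hα : ContDiff ℝ (⊤ : ℕ∞) α) (hβ : ContDiff ℝ (⊤ : ℕ∞) β) (hσ : ContDiff ℝ (⊤ : ℕ∞) σ) :
    lieBracket Ds (Px χ) = (fun p => -(Px χ p)) ∧
    lieBracket Ds (Py ρ) = (fun p => -(Py ρ p)) ∧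
    lieBracket Ds (Rx α) = (fun p => (-2 : ℝ) • Rx α p) ∧
    lieBracket Ds (Ry β) = (fun p => (-2 : ℝ) • Ry β p) ∧
    lieBracket Ds (Zf σ) = (fun p => (-3 : ℝ) • Zf σ p) := by
  refine ⟨?_, ?_, ?_, ?_, ?_⟩ <;> funext p
  · simp only [lieBracket, fderiv_Px_apply χ hχ, fderiv_Ds_apply, Ds, Px,
      Prod.mk_sub_mk, Prod.neg_mk, Prod.mk.injEq]
    refine ⟨by ring, by ring, by ring, by ring⟩
  · simp only [lieBracket, fderiv_Py_apply ρ hρ, fderiv_Ds_apply, Ds, Py,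
      Prod.mk_sub_mk, Prod.neg_mk, Prod.mk.injEq]
    refine ⟨by ring, by ring, by ring, by ring⟩
  · simp only [lieBracket, fderiv_Rx_apply α hα, fderiv_Ds_apply, Ds, Rx,
      Prod.mk_sub_mk, Prod.smul_mk, smul_eq_mul, Prod.mk.injEq]
    refine ⟨by ring, by ring, by ring, by ring⟩
  · simp only [lieBracket, fderiv_Ry_apply β hβ, fderiv_Ds_apply, Ds, Ry,
      Prod.mk_sub_mk, Prod.smul_mk, smul_eq_mul, Prod.mk.injEq]
    refine ⟨by ring, by ring, by ring, by ring⟩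
  · simp only [lieBracket, fderiv_Zf_apply σ hσ, fderiv_Ds_apply, Ds, Zf,
      Prod.mk_sub_mk, Prod.smul_mk, smul_eq_mul, Prod.mk.injEq]
    refine ⟨by ring, by ring, by ring, by ring⟩
end

section
/- For all smooth functions τ, χ, ρ, α, α¹, α², β, β¹, β², σ, σ¹, σ² : ℝ → ℝ, the following Lie brackets vanish identically on ℝ⁴: [Dᵗ(τ), Dˢ] = 0, [Pˣ(χ), Pʸ(ρ)] = 0, [Pˣ(χ), Rʸ(β)] = 0, [Pʸ(ρ), Rˣ(α)] = 0, [Pˣ(χ), Z(σ)] = 0, [Pʸ(ρ), Z(σ)] = 0, [Rˣ(α¹), Rˣ(α²)] = 0, [Rʸ(β¹), Rʸ(β²)] = 0, [Rˣ(α), Rʸ(β)] = 0, [Rˣ(α), Z(σ)] = 0, [Rʸ(β), Z(σ)] = 0, and [Z(σ¹), Z(σ²)] = 0. -/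
namespace VB

abbrev E4 := ℝ × ℝ × ℝ × ℝ

lemma d1 {f : ℝ → ℝ} (hf : ContDiff ℝ (⊤ : ℕ∞) f) : Differentiable ℝ f :=
  hf.differentiable (by simp)

lemma cd_deriv {f : ℝ → ℝ} (hf : ContDiff ℝ (⊤ : ℕ∞) f) : ContDiff ℝ (⊤ : ℕ∞) (deriv f) :=
  (contDiff_infty_iff_deriv.mp (hf.of_le (by simp))).2

lemma d2 {f : ℝ → ℝ} (hf : ContDiff ℝ (⊤ : ℕ∞) f) : Differentiable ℝ (deriv f) :=
  (contDiff_infty_iff_deriv.mp (cd_deriv hf)).1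

lemma d3 {f : ℝ → ℝ} (hf : ContDiff ℝ (⊤ : ℕ∞) f) : Differentiable ℝ (deriv (deriv f)) :=
  (contDiff_infty_iff_deriv.mp (contDiff_infty_iff_deriv.mp (cd_deriv hf)).2).1

lemma hT {f : ℝ → ℝ} (hf : Differentiable ℝ f) (p : E4) :
    HasFDerivAt (fun q : E4 => f q.1)
      (deriv f p.1 • ContinuousLinearMap.fst ℝ ℝ (ℝ × ℝ × ℝ)) p :=
  HasDerivAt.comp_hasFDerivAt p ((hf p.1).hasDerivAt) hasFDerivAt_fst

lemma hX (p : E4) : HasFDerivAt (fun q : E4 => q.2.1)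
    ((ContinuousLinearMap.fst ℝ ℝ (ℝ × ℝ)).comp (ContinuousLinearMap.snd ℝ ℝ (ℝ × ℝ × ℝ))) p :=
  (hasFDerivAt_snd (E := ℝ) (F := ℝ × ℝ × ℝ) (p := p)).fst

lemma hY (p : E4) : HasFDerivAt (fun q : E4 => q.2.2.1)
    (((ContinuousLinearMap.fst ℝ ℝ ℝ).comp (ContinuousLinearMap.snd ℝ ℝ (ℝ × ℝ))).comp
      (ContinuousLinearMap.snd ℝ ℝ (ℝ × ℝ × ℝ))) p :=
  by have h := (hasFDerivAt_snd (𝕜 := ℝ) (E := ℝ) (F := ℝ × ℝ × ℝ) (p := p)).snd; exact h.fst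

lemma hU (p : E4) : HasFDerivAt (fun q : E4 => q.2.2.2)
    (((ContinuousLinearMap.snd ℝ ℝ ℝ).comp (ContinuousLinearMap.snd ℝ ℝ (ℝ × ℝ))).comp
      (ContinuousLinearMap.snd ℝ ℝ (ℝ × ℝ × ℝ))) p :=
  by have h := (hasFDerivAt_snd (𝕜 := ℝ) (E := ℝ) (F := ℝ × ℝ × ℝ) (p := p)).snd; exact h.snd

lemma hXpow (n : ℕ) (p : E4) : HasFDerivAt (fun q : E4 => q.2.1 ^ n)
    ((↑n * p.2.1 ^ (n - 1)) •
      ((ContinuousLinearMap.fst ℝ ℝ (ℝ × ℝ)).comp (ContinuousLinearMap.snd ℝ ℝ (ℝ × ℝ × ℝ)))) p :=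
  HasDerivAt.comp_hasFDerivAt p (hasDerivAt_pow n p.2.1) (hX p)

lemma hYpow (n : ℕ) (p : E4) : HasFDerivAt (fun q : E4 => q.2.2.1 ^ n)
    ((↑n * p.2.2.1 ^ (n - 1)) •
      (((ContinuousLinearMap.fst ℝ ℝ ℝ).comp (ContinuousLinearMap.snd ℝ ℝ (ℝ × ℝ))).comp
        (ContinuousLinearMap.snd ℝ ℝ (ℝ × ℝ × ℝ)))) p :=
  HasDerivAt.comp_hasFDerivAt p (hasDerivAt_pow n p.2.2.1) (hY p)

lemma fderiv_Dt {τ : ℝ → ℝ} (hτ : ContDiff ℝ (⊤ : ℕ∞) τ) (p v : E4) :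
    fderiv ℝ (Dt τ) p v =
      (deriv τ p.1 * v.1,
       (deriv τ p.1 * v.2.1 + deriv (deriv τ) p.1 * v.1 * p.2.1) / 3,
       (deriv τ p.1 * v.2.2.1 + deriv (deriv τ) p.1 * v.1 * p.2.2.1) / 3,
       (-deriv (deriv τ) p.1 * (3 * p.2.1 ^ 2 * v.2.1 + 3 * p.2.2.1 ^ 2 * v.2.2.1)
         - deriv (deriv (deriv τ)) p.1 * v.1 * (p.2.1 ^ 3 + p.2.2.1 ^ 3)) / 18) := by
  have H : HasFDerivAt (Dt τ) _ p :=
    (hT (d1 hτ) p).prodMk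
      ((((hT (d2 hτ) p).mul (hX p)).mul_const ((3:ℝ)⁻¹)).prodMk
        ((((hT (d2 hτ) p).mul (hY p)).mul_const ((3:ℝ)⁻¹)).prodMk
          ((((hT (d3 hτ) p).neg.mul ((hXpow 3 p).add (hYpow 3 p))).mul_const ((18:ℝ)⁻¹)))))
  rw [H.fderiv]
  simp only [ContinuousLinearMap.prod_apply, ContinuousLinearMap.add_apply,
    ContinuousLinearMap.smul_apply, ContinuousLinearMap.coe_comp',
    ContinuousLinearMap.coe_fst', ContinuousLinearMap.coe_snd', Function.comp_apply,
    ContinuousLinearMap.neg_apply, smul_eq_mul, Prod.mk.injEq]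
  norm_num
  and_intros <;> ring

lemma fderiv_Ds (p v : E4) :
    fderiv ℝ Ds p v = (0, v.2.1, v.2.2.1, 3 * v.2.2.2) := by
  have H : HasFDerivAt Ds _ p :=
    (hasFDerivAt_const (0:ℝ) p).prodMk ((hX p).prodMk ((hY p).prodMk ((hU p).const_mul 3)))
  rw [H.fderiv]
  simp [ContinuousLinearMap.prod_apply, smul_eq_mul]

lemma fderiv_Px {χ : ℝ → ℝ} (hχ : ContDiff ℝ (⊤ : ℕ∞) χ) (p v : E4) :
    fderiv ℝ (Px χ) p v =
      (0, deriv χ p.1 * v.1, 0,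
       (-deriv χ p.1 * (2 * p.2.1 * v.2.1) - deriv (deriv χ) p.1 * v.1 * p.2.1 ^ 2) / 2) := by
  have H : HasFDerivAt (Px χ) _ p :=
    (hasFDerivAt_const (0:ℝ) p).prodMk ((hT (d1 hχ) p).prodMk ((hasFDerivAt_const (0:ℝ) p).prodMk
      (((hT (d2 hχ) p).neg.mul (hXpow 2 p)).mul_const ((2:ℝ)⁻¹))))
  rw [H.fderiv]
  simp only [ContinuousLinearMap.prod_apply, ContinuousLinearMap.add_apply,
    ContinuousLinearMap.smul_apply, ContinuousLinearMap.coe_comp',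
    ContinuousLinearMap.coe_fst', ContinuousLinearMap.coe_snd', Function.comp_apply,
    ContinuousLinearMap.neg_apply, ContinuousLinearMap.zero_apply, smul_eq_mul, Prod.mk.injEq]
  norm_num
  ring

lemma fderiv_Py {ρ : ℝ → ℝ} (hρ : ContDiff ℝ (⊤ : ℕ∞) ρ) (p v : E4) :
    fderiv ℝ (Py ρ) p v =
      (0, 0, deriv ρ p.1 * v.1,
       (-deriv ρ p.1 * (2 * p.2.2.1 * v.2.2.1) - deriv (deriv ρ) p.1 * v.1 * p.2.2.1 ^ 2) / 2) := by
  have H : HasFDerivAt (Py ρ) _ p :=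
    (hasFDerivAt_const (0:ℝ) p).prodMk ((hasFDerivAt_const (0:ℝ) p).prodMk ((hT (d1 hρ) p).prodMk
      (((hT (d2 hρ) p).neg.mul (hYpow 2 p)).mul_const ((2:ℝ)⁻¹))))
  rw [H.fderiv]
  simp only [ContinuousLinearMap.prod_apply, ContinuousLinearMap.add_apply,
    ContinuousLinearMap.smul_apply, ContinuousLinearMap.coe_comp',
    ContinuousLinearMap.coe_fst', ContinuousLinearMap.coe_snd', Function.comp_apply,
    ContinuousLinearMap.neg_apply, ContinuousLinearMap.zero_apply, smul_eq_mul, Prod.mk.injEq]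
  norm_num
  ring

lemma fderiv_Rx {α : ℝ → ℝ} (hα : ContDiff ℝ (⊤ : ℕ∞) α) (p v : E4) :
    fderiv ℝ (Rx α) p v =
      (0, 0, 0, α p.1 * v.2.1 + deriv α p.1 * v.1 * p.2.1) := by
  have H : HasFDerivAt (Rx α) _ p :=
    (hasFDerivAt_const (0:ℝ) p).prodMk ((hasFDerivAt_const (0:ℝ) p).prodMk
      ((hasFDerivAt_const (0:ℝ) p).prodMk ((hT (d1 hα) p).mul (hX p))))
  rw [H.fderiv]
  simp only [ContinuousLinearMap.prod_apply, ContinuousLinearMap.add_apply,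
    ContinuousLinearMap.smul_apply, ContinuousLinearMap.coe_comp',
    ContinuousLinearMap.coe_fst', ContinuousLinearMap.coe_snd', Function.comp_apply,
    ContinuousLinearMap.zero_apply, smul_eq_mul, Prod.mk.injEq]
  exact ⟨trivial, trivial, trivial, by ring⟩

lemma fderiv_Ry {β : ℝ → ℝ} (hβ : ContDiff ℝ (⊤ : ℕ∞) β) (p v : E4) :
    fderiv ℝ (Ry β) p v =
      (0, 0, 0, β p.1 * v.2.2.1 + deriv β p.1 * v.1 * p.2.2.1) := by
  have H : HasFDerivAt (Ry β) _ p :=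
    (hasFDerivAt_const (0:ℝ) p).prodMk ((hasFDerivAt_const (0:ℝ) p).prodMk
      ((hasFDerivAt_const (0:ℝ) p).prodMk ((hT (d1 hβ) p).mul (hY p))))
  rw [H.fderiv]
  simp only [ContinuousLinearMap.prod_apply, ContinuousLinearMap.add_apply,
    ContinuousLinearMap.smul_apply, ContinuousLinearMap.coe_comp',
    ContinuousLinearMap.coe_fst', ContinuousLinearMap.coe_snd', Function.comp_apply,
    ContinuousLinearMap.zero_apply, smul_eq_mul, Prod.mk.injEq]
  exact ⟨trivial, trivial, trivial, by ring⟩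

lemma fderiv_Zf {σ : ℝ → ℝ} (hσ : ContDiff ℝ (⊤ : ℕ∞) σ) (p v : E4) :
    fderiv ℝ (Zf σ) p v = (0, 0, 0, deriv σ p.1 * v.1) := by
  have H : HasFDerivAt (Zf σ) _ p :=
    (hasFDerivAt_const (0:ℝ) p).prodMk ((hasFDerivAt_const (0:ℝ) p).prodMk
      ((hasFDerivAt_const (0:ℝ) p).prodMk (hT (d1 hσ) p)))
  rw [H.fderiv]
  simp [smul_eq_mul]

end VB


open VB in
theorem vanishing_brackets (τ χ ρ α α1 α2 β β1 β2 σ σ1 σ2 : ℝ → ℝ)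
    (hτ : ContDiff ℝ (⊤ : ℕ∞) τ) (hχ : ContDiff ℝ (⊤ : ℕ∞) χ) (hρ : ContDiff ℝ (⊤ : ℕ∞) ρ)
    (hα : ContDiff ℝ (⊤ : ℕ∞) α) (hα1 : ContDiff ℝ (⊤ : ℕ∞) α1) (hα2 : ContDiff ℝ (⊤ : ℕ∞) α2)
    (hβ : ContDiff ℝ (⊤ : ℕ∞) β) (hβ1 : ContDiff ℝ (⊤ : ℕ∞) β1) (hβ2 : ContDiff ℝ (⊤ : ℕ∞) β2)
    (hσ : ContDiff ℝ (⊤ : ℕ∞) σ) (hσ1 : ContDiff ℝ (⊤ : ℕ∞) σ1) (hσ2 : ContDiff ℝ (⊤ : ℕ∞) σ2) :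
    lieBracket (Dt τ) Ds = 0 ∧
    lieBracket (Px χ) (Py ρ) = 0 ∧
    lieBracket (Px χ) (Ry β) = 0 ∧
    lieBracket (Py ρ) (Rx α) = 0 ∧
    lieBracket (Px χ) (Zf σ) = 0 ∧
    lieBracket (Py ρ) (Zf σ) = 0 ∧
    lieBracket (Rx α1) (Rx α2) = 0 ∧
    lieBracket (Ry β1) (Ry β2) = 0 ∧
    lieBracket (Rx α) (Ry β) = 0 ∧
    lieBracket (Rx α) (Zf σ) = 0 ∧
    lieBracket (Ry β) (Zf σ) = 0 ∧
    lieBracket (Zf σ1) (Zf σ2) = 0 := by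
  refine ⟨?_, ?_, ?_, ?_, ?_, ?_, ?_, ?_, ?_, ?_, ?_, ?_⟩ <;> funext p
  · show fderiv ℝ Ds p (Dt τ p) - fderiv ℝ (Dt τ) p (Ds p) = 0
    rw [fderiv_Ds, fderiv_Dt hτ]
    simp only [Dt, Ds, Prod.mk_sub_mk, Prod.mk_eq_zero, Prod.ext_iff]
    norm_num
    and_intros <;> ring
  · show fderiv ℝ (Py ρ) p (Px χ p) - fderiv ℝ (Px χ) p (Py ρ p) = 0
    rw [fderiv_Py hρ, fderiv_Px hχ]
    simp only [Px, Py, Prod.mk_sub_mk]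
    norm_num
  · show fderiv ℝ (Ry β) p (Px χ p) - fderiv ℝ (Px χ) p (Ry β p) = 0
    rw [fderiv_Ry hβ, fderiv_Px hχ]
    simp only [Px, Ry, Prod.mk_sub_mk]
    norm_num
  · show fderiv ℝ (Rx α) p (Py ρ p) - fderiv ℝ (Py ρ) p (Rx α p) = 0
    rw [fderiv_Rx hα, fderiv_Py hρ]
    simp only [Px, Py, Rx, Prod.mk_sub_mk]
    norm_num
  · show fderiv ℝ (Zf σ) p (Px χ p) - fderiv ℝ (Px χ) p (Zf σ p) = 0
    rw [fderiv_Zf hσ, fderiv_Px hχ]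
    simp only [Px, Zf, Prod.mk_sub_mk]
    norm_num
  · show fderiv ℝ (Zf σ) p (Py ρ p) - fderiv ℝ (Py ρ) p (Zf σ p) = 0
    rw [fderiv_Zf hσ, fderiv_Py hρ]
    simp only [Py, Zf, Prod.mk_sub_mk]
    norm_num
  · show fderiv ℝ (Rx α2) p (Rx α1 p) - fderiv ℝ (Rx α1) p (Rx α2 p) = 0
    rw [fderiv_Rx hα2, fderiv_Rx hα1]
    simp only [Rx, Prod.mk_sub_mk]
    norm_num
  · show fderiv ℝ (Ry β2) p (Ry β1 p) - fderiv ℝ (Ry β1) p (Ry β2 p) = 0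
    rw [fderiv_Ry hβ2, fderiv_Ry hβ1]
    simp only [Ry, Prod.mk_sub_mk]
    norm_num
  · show fderiv ℝ (Ry β) p (Rx α p) - fderiv ℝ (Rx α) p (Ry β p) = 0
    rw [fderiv_Ry hβ, fderiv_Rx hα]
    simp only [Rx, Ry, Prod.mk_sub_mk]
    norm_num
  · show fderiv ℝ (Zf σ) p (Rx α p) - fderiv ℝ (Rx α) p (Zf σ p) = 0
    rw [fderiv_Zf hσ, fderiv_Rx hα]
    simp only [Rx, Zf, Prod.mk_sub_mk]
    norm_num
  · show fderiv ℝ (Zf σ) p (Ry β p) - fderiv ℝ (Ry β) p (Zf σ p) = 0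
    rw [fderiv_Zf hσ, fderiv_Ry hβ]
    simp only [Ry, Zf, Prod.mk_sub_mk]
    norm_num
  · show fderiv ℝ (Zf σ2) p (Zf σ1 p) - fderiv ℝ (Zf σ1) p (Zf σ2 p) = 0
    rw [fderiv_Zf hσ2, fderiv_Zf hσ1]
    simp only [Zf, Prod.mk_sub_mk]
    norm_num
end

section
/- Let C ≠ 0 be a real constant, let T : ℝ → ℝ be a smooth bijection whose derivative T' is nowhere zero, let F : ℝ → ℝ be a smooth function with F(t)³ = C³·T'(t) for every t, and let X⁰, Y⁰, W⁰, W¹, W² : ℝ → ℝ be smooth. Define Φ : ℝ³ → ℝ³ by Φ(t,x,y) = (T(t), F(t)x + X⁰(t), F(t)y + Y⁰(t)). If u : ℝ³ → ℝ is a smooth solution of the dispersionless Nizhnik equation and ũ : ℝ³ → ℝ is a smooth function satisfying ũ(Φ(t,x,y)) = C³u(t,x,y) − (C³T''(t)/(18T'(t)))·(x³+y³) − (C³/(2F(t)))·(X⁰'(t)x² + Y⁰'(t)y²) + W¹(t)x + W²(t)y + W⁰(t) for all (t,x,y) ∈ ℝ³, then ũ is a smooth solution of the dispersionless Nizhnik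 equation. -/
/-- Partial derivative with respect to `t` of a function on `ℝ³ = ℝ × ℝ × ℝ` with
coordinates `(t, x, y)`. -/
noncomputable def pt (u : ℝ × ℝ × ℝ → ℝ) : ℝ × ℝ × ℝ → ℝ :=
  fun p => deriv (fun s => u (s, p.2.1, p.2.2)) p.1

/-- Partial derivative with respect to `x`. -/
noncomputable def px (u : ℝ × ℝ × ℝ → ℝ) : ℝ × ℝ × ℝ → ℝ :=
  fun p => deriv (fun s => u (p.1, s, p.2.2)) p.2.1

/-- Partial derivative with respect to `y`. -/
noncomputable def py (u : ℝ × ℝ × ℝ → ℝ) : ℝ × ℝ × ℝ → ℝ :=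
  fun p => deriv (fun s => u (p.1, p.2.1, s)) p.2.2

/-- `u` is a smooth solution of the dispersionless Nizhnik equation
`u_{txy} = (u_{xx}u_{xy})_x + (u_{xy}u_{yy})_y`. -/
def IsDNSolution (u : ℝ × ℝ × ℝ → ℝ) : Prop :=
  ContDiff ℝ (⊤ : ℕ∞) u ∧
    ∀ p : ℝ × ℝ × ℝ,
      pt (px (py u)) p =
        px (fun q => px (px u) q * px (py u) q) p +
        py (fun q => px (py u) q * py (py u) q) p

namespace DNaux

lemma clm_decomp (L : (ℝ × ℝ × ℝ) →L[ℝ] ℝ) (a b c : ℝ) :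
    L (a, b, c) = a * L (1,0,0) + b * L (0,1,0) + c * L (0,0,1) := by
  have h : ((a, b, c) : ℝ × ℝ × ℝ)
      = a • ((1:ℝ),(0:ℝ),(0:ℝ)) + b • ((0:ℝ),(1:ℝ),(0:ℝ)) + c • ((0:ℝ),(0:ℝ),(1:ℝ)) := by
    simp [Prod.ext_iff]
  rw [h, map_add, map_add, map_smul, map_smul, map_smul]
  simp [smul_eq_mul]

lemma pt_fderiv {u : ℝ × ℝ × ℝ → ℝ} {p : ℝ × ℝ × ℝ} (hu : DifferentiableAt ℝ u p) :
    pt u p = fderiv ℝ u p (1, 0, 0) :=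
  (hu.hasFDerivAt.comp_hasDerivAt p.1
    ((hasDerivAt_id p.1).prodMk ((hasDerivAt_const p.1 p.2.1).prodMk (hasDerivAt_const p.1 p.2.2)))).deriv

lemma px_fderiv {u : ℝ × ℝ × ℝ → ℝ} {p : ℝ × ℝ × ℝ} (hu : DifferentiableAt ℝ u p) :
    px u p = fderiv ℝ u p (0, 1, 0) :=
  (hu.hasFDerivAt.comp_hasDerivAt p.2.1
    ((hasDerivAt_const p.2.1 p.1).prodMk ((hasDerivAt_id p.2.1).prodMk (hasDerivAt_const p.2.1 p.2.2)))).deriv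

lemma py_fderiv {u : ℝ × ℝ × ℝ → ℝ} {p : ℝ × ℝ × ℝ} (hu : DifferentiableAt ℝ u p) :
    py u p = fderiv ℝ u p (0, 0, 1) :=
  (hu.hasFDerivAt.comp_hasDerivAt p.2.2
    ((hasDerivAt_const p.2.2 p.1).prodMk ((hasDerivAt_const p.2.2 p.2.1).prodMk (hasDerivAt_id p.2.2)))).deriv

lemma contDiff_clm_apply {u : ℝ × ℝ × ℝ → ℝ} (hu : ContDiff ℝ (⊤ : ℕ∞) u) (v : ℝ × ℝ × ℝ) :
    ContDiff ℝ (⊤ : ℕ∞) (fun p => fderiv ℝ u p v) :=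
  (hu.fderiv_right ((by simp))).clm_apply contDiff_const

lemma contDiff_pt {u : ℝ × ℝ × ℝ → ℝ} (hu : ContDiff ℝ (⊤ : ℕ∞) u) : ContDiff ℝ (⊤ : ℕ∞) (pt u) := by
  have h : pt u = fun p => fderiv ℝ u p (1,0,0) :=
    funext fun p => pt_fderiv (hu.differentiable (by simp)).differentiableAt
  rw [h]; exact contDiff_clm_apply hu _

lemma contDiff_px {u : ℝ × ℝ × ℝ → ℝ} (hu : ContDiff ℝ (⊤ : ℕ∞) u) : ContDiff ℝ (⊤ : ℕ∞) (px u) := by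
  have h : px u = fun p => fderiv ℝ u p (0,1,0) :=
    funext fun p => px_fderiv (hu.differentiable (by simp)).differentiableAt
  rw [h]; exact contDiff_clm_apply hu _

lemma contDiff_py {u : ℝ × ℝ × ℝ → ℝ} (hu : ContDiff ℝ (⊤ : ℕ∞) u) : ContDiff ℝ (⊤ : ℕ∞) (py u) := by
  have h : py u = fun p => fderiv ℝ u p (0,0,1) :=
    funext fun p => py_fderiv (hu.differentiable (by simp)).differentiableAt
  rw [h]; exact contDiff_clm_apply hu _

lemma hasDerivAt_sec_t {u : ℝ × ℝ × ℝ → ℝ} (hu : ContDiff ℝ (⊤ : ℕ∞) u) (p : ℝ × ℝ × ℝ) :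
    HasDerivAt (fun s => u (s, p.2.1, p.2.2)) (pt u p) p.1 := by
  have hd : DifferentiableAt ℝ (fun s => u (s, p.2.1, p.2.2)) p.1 :=
    ((hu.differentiable (by simp)) _).comp p.1
      (differentiableAt_id.prodMk ((differentiableAt_const _).prodMk (differentiableAt_const _)))
  exact hd.hasDerivAt

lemma hasDerivAt_sec_x {u : ℝ × ℝ × ℝ → ℝ} (hu : ContDiff ℝ (⊤ : ℕ∞) u) (p : ℝ × ℝ × ℝ) :
    HasDerivAt (fun s => u (p.1, s, p.2.2)) (px u p) p.2.1 := by
  have hd : DifferentiableAt ℝ (fun s => u (p.1, s, p.2.2)) p.2.1 :=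
    ((hu.differentiable (by simp)) _).comp p.2.1
      ((differentiableAt_const _).prodMk (differentiableAt_id.prodMk (differentiableAt_const _)))
  exact hd.hasDerivAt

lemma hasDerivAt_sec_y {u : ℝ × ℝ × ℝ → ℝ} (hu : ContDiff ℝ (⊤ : ℕ∞) u) (p : ℝ × ℝ × ℝ) :
    HasDerivAt (fun s => u (p.1, p.2.1, s)) (py u p) p.2.2 := by
  have hd : DifferentiableAt ℝ (fun s => u (p.1, p.2.1, s)) p.2.2 :=
    ((hu.differentiable (by simp)) _).comp p.2.2
      ((differentiableAt_const _).prodMk ((differentiableAt_const _).prodMk differentiableAt_id))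
  exact hd.hasDerivAt

section chain
variable {T F X0 Y0 : ℝ → ℝ} {Φ : ℝ × ℝ × ℝ → ℝ × ℝ × ℝ}
variable (hΦ : ∀ t x y : ℝ, Φ (t, x, y) = (T t, F t * x + X0 t, F t * y + Y0 t))
variable {w : ℝ × ℝ × ℝ → ℝ} (hw : ContDiff ℝ (⊤ : ℕ∞) w)

include hΦ hw

lemma hasDerivAt_comp_x (t x y : ℝ) :
    HasDerivAt (fun s => w (Φ (t, s, y))) (F t * px w (Φ (t, x, y))) x := by
  have hsec : (fun s => w (Φ (t, s, y)))
      = fun s => w (T t, F t * s + X0 t, F t * y + Y0 t) := funext fun s => by rw [hΦ]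
  have hcurve : HasDerivAt (fun s : ℝ => ((T t, F t * s + X0 t, F t * y + Y0 t) : ℝ × ℝ × ℝ))
      (0, F t * 1, 0) x :=
    (hasDerivAt_const x (T t)).prodMk
      ((((hasDerivAt_id x).const_mul (F t)).add_const (X0 t)).prodMk
        (hasDerivAt_const x (F t * y + Y0 t)))
  have hdw : DifferentiableAt ℝ w (T t, F t * x + X0 t, F t * y + Y0 t) :=
    (hw.differentiable (by simp)).differentiableAt
  have h := hdw.hasFDerivAt.comp_hasDerivAt x hcurve
  rw [hsec]
  refine h.congr_deriv ?_
  rw [clm_decomp, ← px_fderiv hdw, hΦ]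
  simp [px]

lemma hasDerivAt_comp_y (t x y : ℝ) :
    HasDerivAt (fun s => w (Φ (t, x, s))) (F t * py w (Φ (t, x, y))) y := by
  have hsec : (fun s => w (Φ (t, x, s)))
      = fun s => w (T t, F t * x + X0 t, F t * s + Y0 t) := funext fun s => by rw [hΦ]
  have hcurve : HasDerivAt (fun s : ℝ => ((T t, F t * x + X0 t, F t * s + Y0 t) : ℝ × ℝ × ℝ))
      (0, 0, F t * 1) y :=
    (hasDerivAt_const y (T t)).prodMk
      ((hasDerivAt_const y (F t * x + X0 t)).prodMk
        (((hasDerivAt_id y).const_mul (F t)).add_const (Y0 t)))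
  have hdw : DifferentiableAt ℝ w (T t, F t * x + X0 t, F t * y + Y0 t) :=
    (hw.differentiable (by simp)).differentiableAt
  have h := hdw.hasFDerivAt.comp_hasDerivAt y hcurve
  rw [hsec]
  refine h.congr_deriv ?_
  rw [clm_decomp, ← py_fderiv hdw, hΦ]
  simp [py]

lemma hasDerivAt_comp_t (hT : ContDiff ℝ (⊤ : ℕ∞) T) (hF : ContDiff ℝ (⊤ : ℕ∞) F)
    (hX0 : ContDiff ℝ (⊤ : ℕ∞) X0) (hY0 : ContDiff ℝ (⊤ : ℕ∞) Y0) (t x y : ℝ) :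
    HasDerivAt (fun s => w (Φ (s, x, y)))
      (deriv T t * pt w (Φ (t, x, y)) + (deriv F t * x + deriv X0 t) * px w (Φ (t, x, y))
        + (deriv F t * y + deriv Y0 t) * py w (Φ (t, x, y))) t := by
  have hsec : (fun s => w (Φ (s, x, y)))
      = fun s => w (T s, F s * x + X0 s, F s * y + Y0 s) := funext fun s => by rw [hΦ]
  have hcurve : HasDerivAt (fun s : ℝ => ((T s, F s * x + X0 s, F s * y + Y0 s) : ℝ × ℝ × ℝ))
      (deriv T t, deriv F t * x + deriv X0 t, deriv F t * y + deriv Y0 t) t :=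
    ((hT.differentiable (by simp) t).hasDerivAt).prodMk
      ((((hF.differentiable (by simp) t).hasDerivAt.mul_const x).add
          (hX0.differentiable (by simp) t).hasDerivAt).prodMk
        (((hF.differentiable (by simp) t).hasDerivAt.mul_const y).add
          (hY0.differentiable (by simp) t).hasDerivAt))
  have hdw : DifferentiableAt ℝ w (T t, F t * x + X0 t, F t * y + Y0 t) :=
    (hw.differentiable (by simp)).differentiableAt
  have h := hdw.hasFDerivAt.comp_hasDerivAt t hcurve
  rw [hsec]
  refine h.congr_deriv ?_
  rw [clm_decomp, ← pt_fderiv hdw, ← px_fderiv hdw, ← py_fderiv hdw, hΦ]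

end chain

end DNaux

open DNaux in
set_option maxHeartbeats 4000000 in
theorem dN_point_symmetry (C : ℝ) (hC : C ≠ 0)
    (T : ℝ → ℝ) (hT : ContDiff ℝ (⊤ : ℕ∞) T) (hTbij : Function.Bijective T)
    (hT' : ∀ t, deriv T t ≠ 0)
    (F : ℝ → ℝ) (hF : ContDiff ℝ (⊤ : ℕ∞) F) (hF3 : ∀ t, F t ^ 3 = C ^ 3 * deriv T t)
    (X0 Y0 W0 W1 W2 : ℝ → ℝ) (hX0 : ContDiff ℝ (⊤ : ℕ∞) X0) (hY0 : ContDiff ℝ (⊤ : ℕ∞) Y0)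
    (hW0 : ContDiff ℝ (⊤ : ℕ∞) W0) (hW1 : ContDiff ℝ (⊤ : ℕ∞) W1) (hW2 : ContDiff ℝ (⊤ : ℕ∞) W2)
    (Φ : ℝ × ℝ × ℝ → ℝ × ℝ × ℝ)
    (hΦ : ∀ t x y : ℝ, Φ (t, x, y) = (T t, F t * x + X0 t, F t * y + Y0 t))
    (u : ℝ × ℝ × ℝ → ℝ) (hu : IsDNSolution u)
    (ut : ℝ × ℝ × ℝ → ℝ) (hut : ContDiff ℝ (⊤ : ℕ∞) ut)
    (heq : ∀ t x y : ℝ,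
      ut (Φ (t, x, y)) =
        C ^ 3 * u (t, x, y) - C ^ 3 * deriv (deriv T) t / (18 * deriv T t) * (x ^ 3 + y ^ 3)
        - C ^ 3 / (2 * F t) * (deriv X0 t * x ^ 2 + deriv Y0 t * y ^ 2)
        + W1 t * x + W2 t * y + W0 t) :
    IsDNSolution ut := by
  have hus : ContDiff ℝ (⊤ : ℕ∞) u := hu.1
  have hFne : ∀ t, F t ≠ 0 := by
    intro t h
    exact mul_ne_zero (pow_ne_zero 3 hC) (hT' t) (by rw [← hF3 t, h]; ring)
  -- smoothness of deriv T
  have hdT : ContDiff ℝ (⊤ : ℕ∞) (deriv T) := by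
    have h : deriv T = fun t => fderiv ℝ T t 1 := rfl
    rw [h]; exact (hT.fderiv_right ((by simp))).clm_apply contDiff_const
  -- 3 F² F' = C³ T''
  have hF3' : ∀ t, 3 * F t ^ 2 * deriv F t = C ^ 3 * deriv (deriv T) t := by
    intro t
    have h1 : HasDerivAt (fun t => F t ^ 3) (3 * F t ^ 2 * deriv F t) t := by
      simpa using (hF.differentiable (by simp) t).hasDerivAt.fun_pow 3
    have h2 : (fun t => F t ^ 3) = fun t => C ^ 3 * deriv T t := funext hF3
    calc 3 * F t ^ 2 * deriv F t = deriv (fun t => F t ^ 3) t := h1.deriv.symm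
      _ = deriv (fun t => C ^ 3 * deriv T t) t := by rw [h2]
      _ = C ^ 3 * deriv (deriv T) t := deriv_const_mul _ (hdT.differentiable (by simp) t)

  -- First-order identities obtained by differentiating `heq` along y and x.
  have hE1 : ∀ t x y : ℝ, F t * py ut (Φ (t, x, y)) =
      C ^ 3 * py u (t, x, y) - C ^ 3 * deriv (deriv T) t / (18 * deriv T t) * (3 * y ^ 2)
        - C ^ 3 / (2 * F t) * (deriv Y0 t * (2 * y)) + W2 t := by
    intro t x y
    have hL : HasDerivAt (fun s => ut (Φ (t, x, s))) (F t * py ut (Φ (t, x, y))) y :=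
      hasDerivAt_comp_y hΦ hut t x y
    have hfun : (fun s => ut (Φ (t, x, s))) = fun s =>
        C ^ 3 * u (t, x, s) - C ^ 3 * deriv (deriv T) t / (18 * deriv T t) * (x ^ 3 + s ^ 3)
          - C ^ 3 / (2 * F t) * (deriv X0 t * x ^ 2 + deriv Y0 t * s ^ 2)
          + W1 t * x + W2 t * s + W0 t := funext fun s => heq t x s
    rw [hfun] at hL
    have h1 : HasDerivAt (fun s => C ^ 3 * u (t, x, s)) (C ^ 3 * py u (t, x, y)) y :=
      (hasDerivAt_sec_y hus (t, x, y)).const_mul (C ^ 3)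
    have h2 := ((hasDerivAt_pow 3 y).const_add (x ^ 3)).const_mul (C ^ 3 * deriv (deriv T) t / (18 * deriv T t))
    have h3 := (((hasDerivAt_pow 2 y).const_mul (deriv Y0 t)).const_add
      (deriv X0 t * x ^ 2)).const_mul (C ^ 3 / (2 * F t))
    have h4 := (hasDerivAt_id y).const_mul (W2 t)
    have hR := ((((h1.sub h2).sub h3).add_const (W1 t * x)).add h4).add_const (W0 t)
    refine (hL.unique hR).trans ?_
    push_cast
    ring
  have hE2 : ∀ t x y : ℝ, F t * px ut (Φ (t, x, y)) =
      C ^ 3 * px u (t, x, y) - C ^ 3 * deriv (deriv T) t / (18 * deriv T t) * (3 * x ^ 2)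
        - C ^ 3 / (2 * F t) * (deriv X0 t * (2 * x)) + W1 t := by
    intro t x y
    have hL : HasDerivAt (fun s => ut (Φ (t, s, y))) (F t * px ut (Φ (t, x, y))) x :=
      hasDerivAt_comp_x hΦ hut t x y
    have hfun : (fun s => ut (Φ (t, s, y))) = fun s =>
        C ^ 3 * u (t, s, y) - C ^ 3 * deriv (deriv T) t / (18 * deriv T t) * (s ^ 3 + y ^ 3)
          - C ^ 3 / (2 * F t) * (deriv X0 t * s ^ 2 + deriv Y0 t * y ^ 2)
          + W1 t * s + W2 t * y + W0 t := funext fun s => heq t s y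
    rw [hfun] at hL
    have h1 : HasDerivAt (fun s => C ^ 3 * u (t, s, y)) (C ^ 3 * px u (t, x, y)) x :=
      (hasDerivAt_sec_x hus (t, x, y)).const_mul (C ^ 3)
    have h2 := ((hasDerivAt_pow 3 x).add_const (y ^ 3)).const_mul (C ^ 3 * deriv (deriv T) t / (18 * deriv T t))
    have h3 := (((hasDerivAt_pow 2 x).const_mul (deriv X0 t)).add_const
      (deriv Y0 t * y ^ 2)).const_mul (C ^ 3 / (2 * F t))
    have h4 := (hasDerivAt_id x).const_mul (W1 t)
    have hR := ((((h1.sub h2).sub h3).add h4).add_const (W2 t * y)).add_const (W0 t)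
    refine (hL.unique hR).trans ?_
    push_cast
    ring
  -- Second-order identities.
  have hE3 : ∀ t x y : ℝ, F t * (F t * px (py ut) (Φ (t, x, y))) =
      C ^ 3 * px (py u) (t, x, y) := by
    intro t x y
    have hL : HasDerivAt (fun s => F t * py ut (Φ (t, s, y)))
        (F t * (F t * px (py ut) (Φ (t, x, y)))) x :=
      (hasDerivAt_comp_x hΦ (contDiff_py hut) t x y).const_mul (F t)
    have hfun : (fun s => F t * py ut (Φ (t, s, y))) = fun s =>
        C ^ 3 * py u (t, s, y) - C ^ 3 * deriv (deriv T) t / (18 * deriv T t) * (3 * y ^ 2)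
          - C ^ 3 / (2 * F t) * (deriv Y0 t * (2 * y)) + W2 t := funext fun s => hE1 t s y
    rw [hfun] at hL
    have hR : HasDerivAt (fun s =>
        C ^ 3 * py u (t, s, y) - C ^ 3 * deriv (deriv T) t / (18 * deriv T t) * (3 * y ^ 2)
          - C ^ 3 / (2 * F t) * (deriv Y0 t * (2 * y)) + W2 t)
        (C ^ 3 * px (py u) (t, x, y)) x :=
      ((((hasDerivAt_sec_x (contDiff_py hus) (t, x, y)).const_mul (C ^ 3)).sub_const
        _).sub_const _).add_const _
    exact hL.unique hR
  have hE4 : ∀ t x y : ℝ, F t * (F t * px (px ut) (Φ (t, x, y))) =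
      C ^ 3 * px (px u) (t, x, y) - C ^ 3 * deriv (deriv T) t / (18 * deriv T t) * (6 * x)
        - C ^ 3 / (2 * F t) * (deriv X0 t * 2) := by
    intro t x y
    have hL : HasDerivAt (fun s => F t * px ut (Φ (t, s, y)))
        (F t * (F t * px (px ut) (Φ (t, x, y)))) x :=
      (hasDerivAt_comp_x hΦ (contDiff_px hut) t x y).const_mul (F t)
    have hfun : (fun s => F t * px ut (Φ (t, s, y))) = fun s =>
        C ^ 3 * px u (t, s, y) - C ^ 3 * deriv (deriv T) t / (18 * deriv T t) * (3 * s ^ 2)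
          - C ^ 3 / (2 * F t) * (deriv X0 t * (2 * s)) + W1 t := funext fun s => hE2 t s y
    rw [hfun] at hL
    have h1 : HasDerivAt (fun s => C ^ 3 * px u (t, s, y)) (C ^ 3 * px (px u) (t, x, y)) x :=
      (hasDerivAt_sec_x (contDiff_px hus) (t, x, y)).const_mul (C ^ 3)
    have h2 := ((hasDerivAt_pow 2 x).const_mul (3 : ℝ)).const_mul (C ^ 3 * deriv (deriv T) t / (18 * deriv T t))
    have h3 := (((hasDerivAt_id x).const_mul (2 : ℝ)).const_mul (deriv X0 t)).const_mul (C ^ 3 / (2 * F t))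
    have hR := ((h1.sub h2).sub h3).add_const (W1 t)
    refine (hL.unique hR).trans ?_
    push_cast
    ring
  have hE5 : ∀ t x y : ℝ, F t * (F t * py (py ut) (Φ (t, x, y))) =
      C ^ 3 * py (py u) (t, x, y) - C ^ 3 * deriv (deriv T) t / (18 * deriv T t) * (6 * y)
        - C ^ 3 / (2 * F t) * (deriv Y0 t * 2) := by
    intro t x y
    have hL : HasDerivAt (fun s => F t * py ut (Φ (t, x, s)))
        (F t * (F t * py (py ut) (Φ (t, x, y)))) y :=
      (hasDerivAt_comp_y hΦ (contDiff_py hut) t x y).const_mul (F t)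
    have hfun : (fun s => F t * py ut (Φ (t, x, s))) = fun s =>
        C ^ 3 * py u (t, x, s) - C ^ 3 * deriv (deriv T) t / (18 * deriv T t) * (3 * s ^ 2)
          - C ^ 3 / (2 * F t) * (deriv Y0 t * (2 * s)) + W2 t := funext fun s => hE1 t x s
    rw [hfun] at hL
    have h1 : HasDerivAt (fun s => C ^ 3 * py u (t, x, s)) (C ^ 3 * py (py u) (t, x, y)) y :=
      (hasDerivAt_sec_y (contDiff_py hus) (t, x, y)).const_mul (C ^ 3)
    have h2 := ((hasDerivAt_pow 2 y).const_mul (3 : ℝ)).const_mul (C ^ 3 * deriv (deriv T) t / (18 * deriv T t))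
    have h3 := (((hasDerivAt_id y).const_mul (2 : ℝ)).const_mul (deriv Y0 t)).const_mul (C ^ 3 / (2 * F t))
    have hR := ((h1.sub h2).sub h3).add_const (W2 t)
    refine (hL.unique hR).trans ?_
    push_cast
    ring
  -- Third-order identities.
  have hE6 : ∀ t x y : ℝ, F t * (F t * (F t * px (px (px ut)) (Φ (t, x, y)))) =
      C ^ 3 * px (px (px u)) (t, x, y) - C ^ 3 * deriv (deriv T) t / (18 * deriv T t) * 6 := by
    intro t x y
    have hL : HasDerivAt (fun s => F t * (F t * px (px ut) (Φ (t, s, y))))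
        (F t * (F t * (F t * px (px (px ut)) (Φ (t, x, y))))) x :=
      ((hasDerivAt_comp_x hΦ (contDiff_px (contDiff_px hut)) t x y).const_mul (F t)).const_mul (F t)
    have hfun : (fun s => F t * (F t * px (px ut) (Φ (t, s, y)))) = fun s =>
        C ^ 3 * px (px u) (t, s, y) - C ^ 3 * deriv (deriv T) t / (18 * deriv T t) * (6 * s)
          - C ^ 3 / (2 * F t) * (deriv X0 t * 2) := funext fun s => hE4 t s y
    rw [hfun] at hL
    have h1 : HasDerivAt (fun s => C ^ 3 * px (px u) (t, s, y))
        (C ^ 3 * px (px (px u)) (t, x, y)) x :=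
      (hasDerivAt_sec_x (contDiff_px (contDiff_px hus)) (t, x, y)).const_mul (C ^ 3)
    have h2 := ((hasDerivAt_id x).const_mul (6 : ℝ)).const_mul (C ^ 3 * deriv (deriv T) t / (18 * deriv T t))
    have hR := (h1.sub h2).sub_const (C ^ 3 / (2 * F t) * (deriv X0 t * 2))
    refine (hL.unique hR).trans ?_
    ring
  have hE7 : ∀ t x y : ℝ, F t * (F t * (F t * px (px (py ut)) (Φ (t, x, y)))) =
      C ^ 3 * px (px (py u)) (t, x, y) := by
    intro t x y
    have hL : HasDerivAt (fun s => F t * (F t * px (py ut) (Φ (t, s, y))))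
        (F t * (F t * (F t * px (px (py ut)) (Φ (t, x, y))))) x :=
      ((hasDerivAt_comp_x hΦ (contDiff_px (contDiff_py hut)) t x y).const_mul (F t)).const_mul (F t)
    have hfun : (fun s => F t * (F t * px (py ut) (Φ (t, s, y)))) = fun s =>
        C ^ 3 * px (py u) (t, s, y) := funext fun s => hE3 t s y
    rw [hfun] at hL
    exact hL.unique
      ((hasDerivAt_sec_x (contDiff_px (contDiff_py hus)) (t, x, y)).const_mul (C ^ 3))
  have hE8 : ∀ t x y : ℝ, F t * (F t * (F t * py (px (py ut)) (Φ (t, x, y)))) =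
      C ^ 3 * py (px (py u)) (t, x, y) := by
    intro t x y
    have hL : HasDerivAt (fun s => F t * (F t * px (py ut) (Φ (t, x, s))))
        (F t * (F t * (F t * py (px (py ut)) (Φ (t, x, y))))) y :=
      ((hasDerivAt_comp_y hΦ (contDiff_px (contDiff_py hut)) t x y).const_mul (F t)).const_mul (F t)
    have hfun : (fun s => F t * (F t * px (py ut) (Φ (t, x, s)))) = fun s =>
        C ^ 3 * px (py u) (t, x, s) := funext fun s => hE3 t x s
    rw [hfun] at hL
    exact hL.unique
      ((hasDerivAt_sec_y (contDiff_px (contDiff_py hus)) (t, x, y)).const_mul (C ^ 3))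
  have hE9 : ∀ t x y : ℝ, F t * (F t * (F t * py (py (py ut)) (Φ (t, x, y)))) =
      C ^ 3 * py (py (py u)) (t, x, y) - C ^ 3 * deriv (deriv T) t / (18 * deriv T t) * 6 := by
    intro t x y
    have hL : HasDerivAt (fun s => F t * (F t * py (py ut) (Φ (t, x, s))))
        (F t * (F t * (F t * py (py (py ut)) (Φ (t, x, y))))) y :=
      ((hasDerivAt_comp_y hΦ (contDiff_py (contDiff_py hut)) t x y).const_mul (F t)).const_mul (F t)
    have hfun : (fun s => F t * (F t * py (py ut) (Φ (t, x, s)))) = fun s =>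
        C ^ 3 * py (py u) (t, x, s) - C ^ 3 * deriv (deriv T) t / (18 * deriv T t) * (6 * s)
          - C ^ 3 / (2 * F t) * (deriv Y0 t * 2) := funext fun s => hE5 t x s
    rw [hfun] at hL
    have h1 : HasDerivAt (fun s => C ^ 3 * py (py u) (t, x, s))
        (C ^ 3 * py (py (py u)) (t, x, y)) y :=
      (hasDerivAt_sec_y (contDiff_py (contDiff_py hus)) (t, x, y)).const_mul (C ^ 3)
    have h2 := ((hasDerivAt_id y).const_mul (6 : ℝ)).const_mul (C ^ 3 * deriv (deriv T) t / (18 * deriv T t))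
    have hR := (h1.sub h2).sub_const (C ^ 3 / (2 * F t) * (deriv Y0 t * 2))
    refine (hL.unique hR).trans ?_
    ring
  -- Mixed t-derivative identity.
  have hE10 : ∀ t x y : ℝ,
      deriv F t * (F t * px (py ut) (Φ (t, x, y))) + F t * (deriv F t * px (py ut) (Φ (t, x, y))
        + F t * (deriv T t * pt (px (py ut)) (Φ (t, x, y))
          + (deriv F t * x + deriv X0 t) * px (px (py ut)) (Φ (t, x, y))
          + (deriv F t * y + deriv Y0 t) * py (px (py ut)) (Φ (t, x, y)))) =
      C ^ 3 * pt (px (py u)) (t, x, y) := by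
    intro t x y
    have hFd : HasDerivAt F (deriv F t) t := (hF.differentiable (by simp) t).hasDerivAt
    have hinner : HasDerivAt (fun s => F s * px (py ut) (Φ (s, x, y)))
        (deriv F t * px (py ut) (Φ (t, x, y))
          + F t * (deriv T t * pt (px (py ut)) (Φ (t, x, y))
            + (deriv F t * x + deriv X0 t) * px (px (py ut)) (Φ (t, x, y))
            + (deriv F t * y + deriv Y0 t) * py (px (py ut)) (Φ (t, x, y)))) t :=
      hFd.mul (hasDerivAt_comp_t hΦ (contDiff_px (contDiff_py hut)) hT hF hX0 hY0 t x y)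
    have hL : HasDerivAt (fun s => F s * (F s * px (py ut) (Φ (s, x, y))))
        (deriv F t * (F t * px (py ut) (Φ (t, x, y))) + F t * (deriv F t * px (py ut) (Φ (t, x, y))
          + F t * (deriv T t * pt (px (py ut)) (Φ (t, x, y))
            + (deriv F t * x + deriv X0 t) * px (px (py ut)) (Φ (t, x, y))
            + (deriv F t * y + deriv Y0 t) * py (px (py ut)) (Φ (t, x, y))))) t :=
      hFd.mul hinner
    have hfun : (fun s => F s * (F s * px (py ut) (Φ (s, x, y)))) = fun s =>
        C ^ 3 * px (py u) (s, x, y) := funext fun s => hE3 s x y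
    rw [hfun] at hL
    exact hL.unique
      ((hasDerivAt_sec_t (contDiff_px (contDiff_py hus)) (t, x, y)).const_mul (C ^ 3))
  constructor
  · exact hut
  rintro ⟨a, b, c⟩
  obtain ⟨t, hts⟩ := hTbij.2 a
  set x : ℝ := (b - X0 t) / F t with hxdef
  set y : ℝ := (c - Y0 t) / F t with hydef
  have hpt : Φ (t, x, y) = (a, b, c) := by
    rw [hΦ, hts]
    have hx : F t * x + X0 t = b := by
      rw [hxdef, mul_comm, div_mul_cancel₀ _ (hFne t)]; ring
    have hy : F t * y + Y0 t = c := by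
      rw [hydef, mul_comm, div_mul_cancel₀ _ (hFne t)]; ring
    rw [hx, hy]
  clear hxdef hydef
  clear_value x y
  rw [← hpt]
  -- expand the PDE for u at (t, x, y)
  have hUx : px (fun q => px (px u) q * px (py u) q) (t, x, y) =
      px (px (px u)) (t, x, y) * px (py u) (t, x, y)
        + px (px u) (t, x, y) * px (px (py u)) (t, x, y) :=
    ((hasDerivAt_sec_x (contDiff_px (contDiff_px hus)) (t, x, y)).mul
      (hasDerivAt_sec_x (contDiff_px (contDiff_py hus)) (t, x, y))).deriv
  have hUy : py (fun q => px (py u) q * py (py u) q) (t, x, y) =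
      py (px (py u)) (t, x, y) * py (py u) (t, x, y)
        + px (py u) (t, x, y) * py (py (py u)) (t, x, y) :=
    ((hasDerivAt_sec_y (contDiff_px (contDiff_py hus)) (t, x, y)).mul
      (hasDerivAt_sec_y (contDiff_py (contDiff_py hus)) (t, x, y))).deriv
  have hPDE : pt (px (py u)) (t, x, y) =
      px (px (px u)) (t, x, y) * px (py u) (t, x, y)
        + px (px u) (t, x, y) * px (px (py u)) (t, x, y)
        + (py (px (py u)) (t, x, y) * py (py u) (t, x, y)
        + px (py u) (t, x, y) * py (py (py u)) (t, x, y)) := by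
    have := hu.2 (t, x, y)
    rw [hUx, hUy] at this
    exact this
  -- expand the goal
  have hGx : px (fun q => px (px ut) q * px (py ut) q) (Φ (t, x, y)) =
      px (px (px ut)) (Φ (t, x, y)) * px (py ut) (Φ (t, x, y))
        + px (px ut) (Φ (t, x, y)) * px (px (py ut)) (Φ (t, x, y)) :=
    ((hasDerivAt_sec_x (contDiff_px (contDiff_px hut)) (Φ (t, x, y))).mul
      (hasDerivAt_sec_x (contDiff_px (contDiff_py hut)) (Φ (t, x, y)))).deriv
  have hGy : py (fun q => px (py ut) q * py (py ut) q) (Φ (t, x, y)) =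
      py (px (py ut)) (Φ (t, x, y)) * py (py ut) (Φ (t, x, y))
        + px (py ut) (Φ (t, x, y)) * py (py (py ut)) (Φ (t, x, y)) :=
    ((hasDerivAt_sec_y (contDiff_px (contDiff_py hut)) (Φ (t, x, y))).mul
      (hasDerivAt_sec_y (contDiff_py (contDiff_py hut)) (Φ (t, x, y)))).deriv
  rw [hGx, hGy]
  -- specialize the transformation identities
  have e3 := hE3 t x y
  have e4 := hE4 t x y
  have e5 := hE5 t x y
  have e6 := hE6 t x y
  have e7 := hE7 t x y
  have e8 := hE8 t x y
  have e9 := hE9 t x y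
  have e10 := hE10 t x y
  have h18 : (18 : ℝ) * deriv T t ≠ 0 := mul_ne_zero (by norm_num) (hT' t)
  have h6F : (6 : ℝ) * F t ≠ 0 := mul_ne_zero (by norm_num) (hFne t)
  have hK : C ^ 3 * deriv (deriv T) t / (18 * deriv T t) = C ^ 3 * deriv F t / (6 * F t) := by
    rw [div_eq_div_iff h18 h6F]
    linear_combination (-(6 * F t)) * hF3' t + 18 * deriv F t * hF3 t
  have hTv : deriv T t = F t ^ 3 / C ^ 3 := by
    rw [eq_div_iff (pow_ne_zero 3 hC)]
    linear_combination (-1 : ℝ) * hF3 t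
  have hFF : F t * F t ≠ 0 := mul_ne_zero (hFne t) (hFne t)
  have hFFF : F t * F t * F t ≠ 0 := mul_ne_zero hFF (hFne t)
  have vP : px (py ut) (Φ (t, x, y)) = C ^ 3 * px (py u) (t, x, y) / (F t * F t) := by
    rw [eq_div_iff hFF]; linear_combination e3
  have vQ : px (px ut) (Φ (t, x, y)) =
      (C ^ 3 * px (px u) (t, x, y) - C ^ 3 * deriv (deriv T) t / (18 * deriv T t) * (6 * x)
        - C ^ 3 / (2 * F t) * (deriv X0 t * 2)) / (F t * F t) := by
    rw [eq_div_iff hFF]; linear_combination e4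
  have vR : py (py ut) (Φ (t, x, y)) =
      (C ^ 3 * py (py u) (t, x, y) - C ^ 3 * deriv (deriv T) t / (18 * deriv T t) * (6 * y)
        - C ^ 3 / (2 * F t) * (deriv Y0 t * 2)) / (F t * F t) := by
    rw [eq_div_iff hFF]; linear_combination e5
  have vS3 : px (px (px ut)) (Φ (t, x, y)) =
      (C ^ 3 * px (px (px u)) (t, x, y)
        - C ^ 3 * deriv (deriv T) t / (18 * deriv T t) * 6) / (F t * F t * F t) := by
    rw [eq_div_iff hFFF]; linear_combination e6
  have vU : px (px (py ut)) (Φ (t, x, y)) =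
      C ^ 3 * px (px (py u)) (t, x, y) / (F t * F t * F t) := by
    rw [eq_div_iff hFFF]; linear_combination e7
  have vV : py (px (py ut)) (Φ (t, x, y)) =
      C ^ 3 * py (px (py u)) (t, x, y) / (F t * F t * F t) := by
    rw [eq_div_iff hFFF]; linear_combination e8
  have vS7 : py (py (py ut)) (Φ (t, x, y)) =
      (C ^ 3 * py (py (py u)) (t, x, y)
        - C ^ 3 * deriv (deriv T) t / (18 * deriv T t) * 6) / (F t * F t * F t) := by
    rw [eq_div_iff hFFF]; linear_combination e9
  have vZ : pt (px (py ut)) (Φ (t, x, y)) =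
      (C ^ 3 * pt (px (py u)) (t, x, y)
        - deriv F t * (F t * px (py ut) (Φ (t, x, y)))
        - F t * (deriv F t * px (py ut) (Φ (t, x, y)))
        - F t * (F t * ((deriv F t * x + deriv X0 t) * px (px (py ut)) (Φ (t, x, y))
            + (deriv F t * y + deriv Y0 t) * py (px (py ut)) (Φ (t, x, y)))))
        / (F t * F t * deriv T t) := by
    rw [eq_div_iff (mul_ne_zero hFF (hT' t))]; linear_combination e10
  rw [vZ, hPDE, vP, vQ, vR, vS3, vU, vV, vS7, hK, hTv]
  have hFt := hFne t
  field_simp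
  ring
end

section
/- Let H : ℝ² → ℝ be smooth. Let C ≠ 0 be a real constant, let T : ℝ → ℝ be a smooth bijection whose derivative T' is nowhere zero, let F : ℝ → ℝ be a smooth function with F(t)³ = C³·T'(t) for every t, and let X⁰, Y⁰, W⁰, W¹, W² : ℝ → ℝ be smooth. Define Φ : ℝ³ → ℝ³ by Φ(t,x,y) = (T(t), F(t)x + X⁰(t), F(t)y + Y⁰(t)). Suppose u : ℝ³ → ℝ is a smooth function with u_{xyy} nowhere zero that satisfies the H-deformed equation at every point of ℝ³, and ũ : ℝ³ → ℝ is a smooth function satisfying ũ(Φ(t,x,y)) = C³u(t,x,y) − (C³T''(t)/(18T'(t)))·(x³+y³) − (C³/(2F(t)))·(X⁰'(t)x² + Y⁰'(t)y²) + W¹(t)x + W²(t)y + W⁰(t) for all (t,x,y) ∈ ℝ³. Then ũ_{xyy} is nowhere zero and ũ satisfies the H-deformed equation at every point of ℝ³. -/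
/-- `u` satisfies, at every point of `ℝ³`, the `H`-deformed equation
`u_{txy} = (u_{xx}u_{xy})_x + (u_{xy}u_{yy})_y
  + u_{xy}·u_{xyy}·H((u_{xxx} − u_{yyy})/u_{xyy}, u_{xxy}/u_{xyy})`. -/
def SatisfiesHDeformed (H : ℝ × ℝ → ℝ) (u : ℝ × ℝ × ℝ → ℝ) : Prop :=
  ∀ p : ℝ × ℝ × ℝ,
    pt (px (py u)) p =
      px (fun q => px (px u) q * px (py u) q) p +
      py (fun q => px (py u) q * py (py u) q) p +
      px (py u) p * px (py (py u)) p *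
        H ((px (px (px u)) p - py (py (py u)) p) / px (py (py u)) p,
           px (px (py u)) p / px (py (py u)) p)

lemma hasDerivAt_slice_t {u : ℝ × ℝ × ℝ → ℝ} (hu : Differentiable ℝ u) (t x y : ℝ) :
    HasDerivAt (fun s => u (s, x, y)) (pt u (t, x, y)) t := by
  have h : Differentiable ℝ (fun s : ℝ => u (s, x, y)) :=
    hu.comp (differentiable_id.prodMk ((differentiable_const x).prodMk (differentiable_const y)))
  simpa [pt] using (h t).hasDerivAt

lemma hasDerivAt_slice_x {u : ℝ × ℝ × ℝ → ℝ} (hu : Differentiable ℝ u) (t x y : ℝ) :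
    HasDerivAt (fun s => u (t, s, y)) (px u (t, x, y)) x := by
  have h : Differentiable ℝ (fun s : ℝ => u (t, s, y)) :=
    hu.comp ((differentiable_const t).prodMk (differentiable_id.prodMk (differentiable_const y)))
  simpa [px] using (h x).hasDerivAt

lemma hasDerivAt_slice_y {u : ℝ × ℝ × ℝ → ℝ} (hu : Differentiable ℝ u) (t x y : ℝ) :
    HasDerivAt (fun s => u (t, x, s)) (py u (t, x, y)) y := by
  have h : Differentiable ℝ (fun s : ℝ => u (t, x, s)) :=
    hu.comp ((differentiable_const t).prodMk ((differentiable_const x).prodMk differentiable_id))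
  simpa [py] using (h y).hasDerivAt

lemma pt_eq_fderiv {g : ℝ × ℝ × ℝ → ℝ} (hg : Differentiable ℝ g) (q : ℝ × ℝ × ℝ) :
    pt g q = fderiv ℝ g q ((1:ℝ), (0:ℝ), (0:ℝ)) := by
  have hin : HasDerivAt (fun s : ℝ => (s, q.2.1, q.2.2)) ((1:ℝ), (0:ℝ), (0:ℝ)) q.1 :=
    (hasDerivAt_id q.1).prodMk ((hasDerivAt_const _ _).prodMk (hasDerivAt_const _ _))
  have h1 : HasDerivAt (fun s => g (s, q.2.1, q.2.2)) (fderiv ℝ g q ((1:ℝ), (0:ℝ), (0:ℝ))) q.1 := by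
    simpa [Function.comp_def] using (hg (q.1, q.2.1, q.2.2)).hasFDerivAt.comp_hasDerivAt q.1 hin
  simp only [pt]; exact h1.deriv

lemma px_eq_fderiv {g : ℝ × ℝ × ℝ → ℝ} (hg : Differentiable ℝ g) (q : ℝ × ℝ × ℝ) :
    px g q = fderiv ℝ g q ((0:ℝ), (1:ℝ), (0:ℝ)) := by
  have hin : HasDerivAt (fun s : ℝ => (q.1, s, q.2.2)) ((0:ℝ), (1:ℝ), (0:ℝ)) q.2.1 :=
    (hasDerivAt_const _ _).prodMk ((hasDerivAt_id _).prodMk (hasDerivAt_const _ _))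
  have h1 : HasDerivAt (fun s => g (q.1, s, q.2.2)) (fderiv ℝ g q ((0:ℝ), (1:ℝ), (0:ℝ))) q.2.1 := by
    simpa [Function.comp_def] using (hg (q.1, q.2.1, q.2.2)).hasFDerivAt.comp_hasDerivAt q.2.1 hin
  simp only [px]; exact h1.deriv

lemma py_eq_fderiv {g : ℝ × ℝ × ℝ → ℝ} (hg : Differentiable ℝ g) (q : ℝ × ℝ × ℝ) :
    py g q = fderiv ℝ g q ((0:ℝ), (0:ℝ), (1:ℝ)) := by
  have hin : HasDerivAt (fun s : ℝ => (q.1, q.2.1, s)) ((0:ℝ), (0:ℝ), (1:ℝ)) q.2.2 :=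
    (hasDerivAt_const _ _).prodMk ((hasDerivAt_const _ _).prodMk (hasDerivAt_id _))
  have h1 : HasDerivAt (fun s => g (q.1, q.2.1, s)) (fderiv ℝ g q ((0:ℝ), (0:ℝ), (1:ℝ))) q.2.2 := by
    simpa [Function.comp_def] using (hg (q.1, q.2.1, q.2.2)).hasFDerivAt.comp_hasDerivAt q.2.2 hin
  simp only [py]; exact h1.deriv

lemma fderiv_triple {g : ℝ × ℝ × ℝ → ℝ} (hg : Differentiable ℝ g) (q : ℝ × ℝ × ℝ)
    (a b c : ℝ) :
    fderiv ℝ g q (a, b, c) = a * pt g q + b * px g q + c * py g q := by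
  have habc : ((a, b, c) : ℝ × ℝ × ℝ) = a • ((1:ℝ), (0:ℝ), (0:ℝ)) + b • ((0:ℝ), (1:ℝ), (0:ℝ)) + c • ((0:ℝ), (0:ℝ), (1:ℝ)) := by
    simp [Prod.ext_iff]
  rw [habc, map_add, map_add, map_smul, map_smul, map_smul,
    ← pt_eq_fderiv hg, ← px_eq_fderiv hg, ← py_eq_fderiv hg]
  simp [smul_eq_mul]

lemma contDiff_pt {u : ℝ × ℝ × ℝ → ℝ} (hu : ContDiff ℝ (⊤ : ℕ∞) u) : ContDiff ℝ (⊤ : ℕ∞) (pt u) := by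
  have hd := hu.differentiable (by simp)
  have : pt u = fun p => fderiv ℝ u p ((1:ℝ), (0:ℝ), (0:ℝ)) := funext fun p => pt_eq_fderiv hd p
  rw [this]
  exact (hu.fderiv_right (m := (⊤ : ℕ∞)) (by simp)).clm_apply contDiff_const

lemma contDiff_px {u : ℝ × ℝ × ℝ → ℝ} (hu : ContDiff ℝ (⊤ : ℕ∞) u) : ContDiff ℝ (⊤ : ℕ∞) (px u) := by
  have hd := hu.differentiable (by simp)
  have : px u = fun p => fderiv ℝ u p ((0:ℝ), (1:ℝ), (0:ℝ)) := funext fun p => px_eq_fderiv hd p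
  rw [this]
  exact (hu.fderiv_right (m := (⊤ : ℕ∞)) (by simp)).clm_apply contDiff_const

lemma contDiff_py {u : ℝ × ℝ × ℝ → ℝ} (hu : ContDiff ℝ (⊤ : ℕ∞) u) : ContDiff ℝ (⊤ : ℕ∞) (py u) := by
  have hd := hu.differentiable (by simp)
  have : py u = fun p => fderiv ℝ u p ((0:ℝ), (0:ℝ), (1:ℝ)) := funext fun p => py_eq_fderiv hd p
  rw [this]
  exact (hu.fderiv_right (m := (⊤ : ℕ∞)) (by simp)).clm_apply contDiff_const

lemma chain_x (T F X0 Y0 : ℝ → ℝ) {g : ℝ × ℝ × ℝ → ℝ} (hg : Differentiable ℝ g)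
    (w : ℝ × ℝ × ℝ → ℝ)
    (hw : ∀ t x y : ℝ, g (T t, F t * x + X0 t, F t * y + Y0 t) = w (t, x, y))
    (t x y : ℝ) :
    px w (t, x, y) = F t * px g (T t, F t * x + X0 t, F t * y + Y0 t) := by
  have hin : HasDerivAt (fun s : ℝ => ((T t, F t * s + X0 t, F t * y + Y0 t) : ℝ × ℝ × ℝ))
      ((0:ℝ), F t, (0:ℝ)) x := by
    refine (hasDerivAt_const _ _).prodMk (HasDerivAt.prodMk ?_ (hasDerivAt_const _ _))
    simpa using ((hasDerivAt_id x).const_mul (F t)).add_const (X0 t)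
  have hcomp := (hg _).hasFDerivAt.comp_hasDerivAt x hin
  rw [Function.comp_def] at hcomp
  have hpx : px w (t, x, y) = deriv (fun s => g (T t, F t * s + X0 t, F t * y + Y0 t)) x := by
    simp only [px]
    congr 1
    funext s
    exact (hw t s y).symm
  rw [hpx, hcomp.deriv, fderiv_triple hg]
  ring

lemma chain_y (T F X0 Y0 : ℝ → ℝ) {g : ℝ × ℝ × ℝ → ℝ} (hg : Differentiable ℝ g)
    (w : ℝ × ℝ × ℝ → ℝ)
    (hw : ∀ t x y : ℝ, g (T t, F t * x + X0 t, F t * y + Y0 t) = w (t, x, y))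
    (t x y : ℝ) :
    py w (t, x, y) = F t * py g (T t, F t * x + X0 t, F t * y + Y0 t) := by
  have hin : HasDerivAt (fun s : ℝ => ((T t, F t * x + X0 t, F t * s + Y0 t) : ℝ × ℝ × ℝ))
      ((0:ℝ), (0:ℝ), F t) y := by
    refine (hasDerivAt_const _ _).prodMk (HasDerivAt.prodMk (hasDerivAt_const _ _) ?_)
    simpa using ((hasDerivAt_id y).const_mul (F t)).add_const (Y0 t)
  have hcomp := (hg _).hasFDerivAt.comp_hasDerivAt y hin
  rw [Function.comp_def] at hcomp
  have hpy : py w (t, x, y) = deriv (fun s => g (T t, F t * x + X0 t, F t * s + Y0 t)) y := by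
    simp only [py]
    congr 1
    funext s
    exact (hw t x s).symm
  rw [hpy, hcomp.deriv, fderiv_triple hg]
  ring

lemma chain_t (T F X0 Y0 : ℝ → ℝ) (hT : ContDiff ℝ (⊤ : ℕ∞) T) (hF : ContDiff ℝ (⊤ : ℕ∞) F)
    (hX0 : ContDiff ℝ (⊤ : ℕ∞) X0) (hY0 : ContDiff ℝ (⊤ : ℕ∞) Y0)
    {g : ℝ × ℝ × ℝ → ℝ} (hg : Differentiable ℝ g)
    (w : ℝ × ℝ × ℝ → ℝ)
    (hw : ∀ t x y : ℝ, g (T t, F t * x + X0 t, F t * y + Y0 t) = w (t, x, y))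
    (t x y : ℝ) :
    pt w (t, x, y) =
      deriv T t * pt g (T t, F t * x + X0 t, F t * y + Y0 t)
      + (deriv F t * x + deriv X0 t) * px g (T t, F t * x + X0 t, F t * y + Y0 t)
      + (deriv F t * y + deriv Y0 t) * py g (T t, F t * x + X0 t, F t * y + Y0 t) := by
  have hTd : HasDerivAt T (deriv T t) t := (hT.differentiable (by simp) t).hasDerivAt
  have hFd : HasDerivAt F (deriv F t) t := (hF.differentiable (by simp) t).hasDerivAt
  have hXd : HasDerivAt X0 (deriv X0 t) t := (hX0.differentiable (by simp) t).hasDerivAt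
  have hYd : HasDerivAt Y0 (deriv Y0 t) t := (hY0.differentiable (by simp) t).hasDerivAt
  have hin : HasDerivAt (fun s : ℝ => ((T s, F s * x + X0 s, F s * y + Y0 s) : ℝ × ℝ × ℝ))
      (deriv T t, deriv F t * x + deriv X0 t, deriv F t * y + deriv Y0 t) t :=
    hTd.prodMk (((hFd.mul_const x).add hXd).prodMk ((hFd.mul_const y).add hYd))
  have hcomp := (hg _).hasFDerivAt.comp_hasDerivAt t hin
  rw [Function.comp_def] at hcomp
  have hpt : pt w (t, x, y) = deriv (fun s => g (T s, F s * x + X0 s, F s * y + Y0 s)) t := by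
    simp only [pt]
    congr 1
    funext s
    exact (hw s x y).symm
  rw [hpt, hcomp.deriv, fderiv_triple hg]
lemma HasDerivAt.congr_val {f : ℝ → ℝ} {a b x : ℝ} (h : HasDerivAt f a x) (e : b = a) :
    HasDerivAt f b x := e ▸ h

lemma step_div1 {X M Ft : ℝ} (hF : Ft ≠ 0) (h2 : Ft * X = M / Ft) :
    X = M / Ft ^ 2 := by
  field_simp at h2 ⊢
  linear_combination h2

lemma step_div2 {X M Ft : ℝ} (hF : Ft ≠ 0) (h2 : Ft * X = M / Ft ^ 2) :
    X = M / Ft ^ 3 := by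
  field_simp at h2 ⊢
  linear_combination h2

set_option maxHeartbeats 4000000 in
theorem HDeformed_point_symmetry (H : ℝ × ℝ → ℝ) (hH : ContDiff ℝ (⊤ : ℕ∞) H)
    (C : ℝ) (hC : C ≠ 0)
    (T : ℝ → ℝ) (hT : ContDiff ℝ (⊤ : ℕ∞) T) (hTbij : Function.Bijective T)
    (hT' : ∀ t, deriv T t ≠ 0)
    (F : ℝ → ℝ) (hF : ContDiff ℝ (⊤ : ℕ∞) F) (hF3 : ∀ t, F t ^ 3 = C ^ 3 * deriv T t)
    (X0 Y0 W0 W1 W2 : ℝ → ℝ) (hX0 : ContDiff ℝ (⊤ : ℕ∞) X0) (hY0 : ContDiff ℝ (⊤ : ℕ∞) Y0)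
    (hW0 : ContDiff ℝ (⊤ : ℕ∞) W0) (hW1 : ContDiff ℝ (⊤ : ℕ∞) W1) (hW2 : ContDiff ℝ (⊤ : ℕ∞) W2)
    (Φ : ℝ × ℝ × ℝ → ℝ × ℝ × ℝ)
    (hΦ : ∀ t x y : ℝ, Φ (t, x, y) = (T t, F t * x + X0 t, F t * y + Y0 t))
    (u : ℝ × ℝ × ℝ → ℝ) (hu : ContDiff ℝ (⊤ : ℕ∞) u)
    (huxyy : ∀ p : ℝ × ℝ × ℝ, px (py (py u)) p ≠ 0)
    (hueq : SatisfiesHDeformed H u)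
    (ut : ℝ × ℝ × ℝ → ℝ) (hut : ContDiff ℝ (⊤ : ℕ∞) ut)
    (heq : ∀ t x y : ℝ,
      ut (Φ (t, x, y)) =
        C ^ 3 * u (t, x, y) - C ^ 3 * deriv (deriv T) t / (18 * deriv T t) * (x ^ 3 + y ^ 3)
        - C ^ 3 / (2 * F t) * (deriv X0 t * x ^ 2 + deriv Y0 t * y ^ 2)
        + W1 t * x + W2 t * y + W0 t) :
    (∀ p : ℝ × ℝ × ℝ, px (py (py ut)) p ≠ 0) ∧ SatisfiesHDeformed H ut := by
  have hC3 : C ^ 3 ≠ 0 := pow_ne_zero _ hC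
  have hFne : ∀ t, F t ≠ 0 := by
    intro t h
    exact mul_ne_zero hC3 (hT' t) (by rw [← hF3 t, h]; ring)
  have huD := hu.differentiable (by simp)
  have hu1 : ContDiff ℝ (⊤ : ℕ∞) (py u) := contDiff_py hu
  have hu2 : ContDiff ℝ (⊤ : ℕ∞) (px (py u)) := contDiff_px hu1
  have hu3 : ContDiff ℝ (⊤ : ℕ∞) (py (py u)) := contDiff_py hu1
  have hux : ContDiff ℝ (⊤ : ℕ∞) (px u) := contDiff_px hu
  have huxx : ContDiff ℝ (⊤ : ℕ∞) (px (px u)) := contDiff_px hux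
  have hv1 : ContDiff ℝ (⊤ : ℕ∞) (py ut) := contDiff_py hut
  have hv2 : ContDiff ℝ (⊤ : ℕ∞) (px (py ut)) := contDiff_px hv1
  have hv3 : ContDiff ℝ (⊤ : ℕ∞) (py (py ut)) := contDiff_py hv1
  have hvx : ContDiff ℝ (⊤ : ℕ∞) (px ut) := contDiff_px hut
  have hvxx : ContDiff ℝ (⊤ : ℕ∞) (px (px ut)) := contDiff_px hvx
  have hT1 : Differentiable ℝ (deriv T) := by
    have hTi : ContDiff ℝ ((⊤ : ℕ∞) : WithTop ℕ∞) T := hT.of_le (by simp)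
    exact (contDiff_infty_iff_deriv.mp hTi).2.differentiable (by simp)
  have hFderiv : ∀ t, 3 * F t ^ 2 * deriv F t = C ^ 3 * deriv (deriv T) t := by
    intro t
    have h1 : HasDerivAt (fun s => F s ^ 3) (3 * F t ^ 2 * deriv F t) t :=
      ((hF.differentiable (by simp) t).hasDerivAt.pow 3).congr_val (by push_cast; ring)
    have h2 : HasDerivAt (fun s => F s ^ 3) (C ^ 3 * deriv (deriv T) t) t := by
      have h := ((hT1 t).hasDerivAt).const_mul (C ^ 3)
      have he : (fun s => F s ^ 3) = fun s => C ^ 3 * deriv T s := funext hF3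
      rw [he]; exact h
    exact h1.unique h2
  have hsurj : ∀ q : ℝ × ℝ × ℝ, ∃ t x y : ℝ,
      ((T t, F t * x + X0 t, F t * y + Y0 t) : ℝ × ℝ × ℝ) = q := by
    intro q
    obtain ⟨t, ht⟩ := hTbij.2 q.1
    refine ⟨t, (q.2.1 - X0 t) / F t, (q.2.2 - Y0 t) / F t, ?_⟩
    have h1 : F t * ((q.2.1 - X0 t) / F t) + X0 t = q.2.1 := by
      field_simp [hFne t]
      ring
    have h2 : F t * ((q.2.2 - Y0 t) / F t) + Y0 t = q.2.2 := by
      field_simp [hFne t]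
      ring
    rw [h1, h2, ht]
  have hc0 : ∀ t x y : ℝ,
      ut (T t, F t * x + X0 t, F t * y + Y0 t) =
      C ^ 3 * u (t, x, y) - C ^ 3 * deriv (deriv T) t / (18 * deriv T t) * (x ^ 3 + y ^ 3)
        - C ^ 3 / (2 * F t) * (deriv X0 t * x ^ 2 + deriv Y0 t * y ^ 2)
        + W1 t * x + W2 t * y + W0 t := by
    intro t x y; rw [← hΦ t x y]; exact heq t x y
  -- first y-derivative
  have hc1y : ∀ t x y : ℝ,
      py ut (T t, F t * x + X0 t, F t * y + Y0 t) =
      (C ^ 3 * py u (t, x, y) - C ^ 3 * deriv (deriv T) t / (18 * deriv T t) * (3 * y ^ 2)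
        - C ^ 3 / (2 * F t) * (deriv Y0 t * (2 * y)) + W2 t) / F t := by
    intro t x y
    have hch := chain_y T F X0 Y0 (hut.differentiable (by simp))
      (fun p => C ^ 3 * u p
        - C ^ 3 * deriv (deriv T) p.1 / (18 * deriv T p.1) * (p.2.1 ^ 3 + p.2.2 ^ 3)
        - C ^ 3 / (2 * F p.1) * (deriv X0 p.1 * p.2.1 ^ 2 + deriv Y0 p.1 * p.2.2 ^ 2)
        + W1 p.1 * p.2.1 + W2 p.1 * p.2.2 + W0 p.1)
      (fun a b c => hc0 a b c) t x y
    have hD : HasDerivAt (fun s => C ^ 3 * u (t, x, s)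
        - C ^ 3 * deriv (deriv T) t / (18 * deriv T t) * (x ^ 3 + s ^ 3)
        - C ^ 3 / (2 * F t) * (deriv X0 t * x ^ 2 + deriv Y0 t * s ^ 2)
        + W1 t * x + W2 t * s + W0 t)
        (C ^ 3 * py u (t, x, y) - C ^ 3 * deriv (deriv T) t / (18 * deriv T t) * (3 * y ^ 2)
          - C ^ 3 / (2 * F t) * (deriv Y0 t * (2 * y)) + W2 t) y :=
      (((((((hasDerivAt_slice_y huD t x y).const_mul (C ^ 3)).sub
          (((hasDerivAt_pow 3 y).const_add (x ^ 3)).const_mul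
            (C ^ 3 * deriv (deriv T) t / (18 * deriv T t)))).sub
          ((((hasDerivAt_pow 2 y).const_mul (deriv Y0 t)).const_add
            (deriv X0 t * x ^ 2)).const_mul (C ^ 3 / (2 * F t)))).add_const (W1 t * x)).add
          ((hasDerivAt_id y).const_mul (W2 t))).add_const (W0 t)).congr_val (by push_cast; ring)
    rw [eq_div_iff (hFne t)]
    have h2 : F t * py ut (T t, F t * x + X0 t, F t * y + Y0 t) =
        C ^ 3 * py u (t, x, y) - C ^ 3 * deriv (deriv T) t / (18 * deriv T t) * (3 * y ^ 2)
        - C ^ 3 / (2 * F t) * (deriv Y0 t * (2 * y)) + W2 t := by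
      rw [← hch]; exact hD.deriv
    linear_combination h2
  -- first x-derivative
  have hc1x : ∀ t x y : ℝ,
      px ut (T t, F t * x + X0 t, F t * y + Y0 t) =
      (C ^ 3 * px u (t, x, y) - C ^ 3 * deriv (deriv T) t / (18 * deriv T t) * (3 * x ^ 2)
        - C ^ 3 / (2 * F t) * (deriv X0 t * (2 * x)) + W1 t) / F t := by
    intro t x y
    have hch := chain_x T F X0 Y0 (hut.differentiable (by simp))
      (fun p => C ^ 3 * u p
        - C ^ 3 * deriv (deriv T) p.1 / (18 * deriv T p.1) * (p.2.1 ^ 3 + p.2.2 ^ 3)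
        - C ^ 3 / (2 * F p.1) * (deriv X0 p.1 * p.2.1 ^ 2 + deriv Y0 p.1 * p.2.2 ^ 2)
        + W1 p.1 * p.2.1 + W2 p.1 * p.2.2 + W0 p.1)
      (fun a b c => hc0 a b c) t x y
    have hD : HasDerivAt (fun s => C ^ 3 * u (t, s, y)
        - C ^ 3 * deriv (deriv T) t / (18 * deriv T t) * (s ^ 3 + y ^ 3)
        - C ^ 3 / (2 * F t) * (deriv X0 t * s ^ 2 + deriv Y0 t * y ^ 2)
        + W1 t * s + W2 t * y + W0 t)
        (C ^ 3 * px u (t, x, y) - C ^ 3 * deriv (deriv T) t / (18 * deriv T t) * (3 * x ^ 2)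
          - C ^ 3 / (2 * F t) * (deriv X0 t * (2 * x)) + W1 t) x :=
      (((((((hasDerivAt_slice_x huD t x y).const_mul (C ^ 3)).sub
          (((hasDerivAt_pow 3 x).add_const (y ^ 3)).const_mul
            (C ^ 3 * deriv (deriv T) t / (18 * deriv T t)))).sub
          ((((hasDerivAt_pow 2 x).const_mul (deriv X0 t)).add_const
            (deriv Y0 t * y ^ 2)).const_mul (C ^ 3 / (2 * F t)))).add
          ((hasDerivAt_id x).const_mul (W1 t))).add_const (W2 t * y)).add_const
          (W0 t)).congr_val (by push_cast; ring)
    rw [eq_div_iff (hFne t)]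
    have h2 : F t * px ut (T t, F t * x + X0 t, F t * y + Y0 t) =
        C ^ 3 * px u (t, x, y) - C ^ 3 * deriv (deriv T) t / (18 * deriv T t) * (3 * x ^ 2)
        - C ^ 3 / (2 * F t) * (deriv X0 t * (2 * x)) + W1 t := by
      rw [← hch]; exact hD.deriv
    linear_combination h2
  -- u_xy
  have hc2 : ∀ t x y : ℝ,
      px (py ut) (T t, F t * x + X0 t, F t * y + Y0 t) =
      C ^ 3 * px (py u) (t, x, y) / F t ^ 2 := by
    intro t x y
    have hch := chain_x T F X0 Y0 (hv1.differentiable (by simp))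
      (fun p => (C ^ 3 * py u p
        - C ^ 3 * deriv (deriv T) p.1 / (18 * deriv T p.1) * (3 * p.2.2 ^ 2)
        - C ^ 3 / (2 * F p.1) * (deriv Y0 p.1 * (2 * p.2.2)) + W2 p.1) / F p.1)
      (fun a b c => hc1y a b c) t x y
    have hD : HasDerivAt (fun s => (C ^ 3 * py u (t, s, y)
        - C ^ 3 * deriv (deriv T) t / (18 * deriv T t) * (3 * y ^ 2)
        - C ^ 3 / (2 * F t) * (deriv Y0 t * (2 * y)) + W2 t) / F t)
        (C ^ 3 * px (py u) (t, x, y) / F t) x :=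
      (((((hasDerivAt_slice_x (hu1.differentiable (by simp)) t x y).const_mul
        (C ^ 3)).sub_const _).sub_const _).add_const _).div_const (F t)
    have h2 : F t * px (py ut) (T t, F t * x + X0 t, F t * y + Y0 t) =
        C ^ 3 * px (py u) (t, x, y) / F t := by
      rw [← hch]; exact hD.deriv
    exact step_div1 (hFne t) h2
  -- u_yy
  have hc3 : ∀ t x y : ℝ,
      py (py ut) (T t, F t * x + X0 t, F t * y + Y0 t) =
      (C ^ 3 * py (py u) (t, x, y) - C ^ 3 * deriv (deriv T) t / (18 * deriv T t) * (6 * y)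
        - C ^ 3 / (2 * F t) * (deriv Y0 t * 2)) / F t ^ 2 := by
    intro t x y
    have hch := chain_y T F X0 Y0 (hv1.differentiable (by simp))
      (fun p => (C ^ 3 * py u p
        - C ^ 3 * deriv (deriv T) p.1 / (18 * deriv T p.1) * (3 * p.2.2 ^ 2)
        - C ^ 3 / (2 * F p.1) * (deriv Y0 p.1 * (2 * p.2.2)) + W2 p.1) / F p.1)
      (fun a b c => hc1y a b c) t x y
    have hD : HasDerivAt (fun s => (C ^ 3 * py u (t, x, s)
        - C ^ 3 * deriv (deriv T) t / (18 * deriv T t) * (3 * s ^ 2)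
        - C ^ 3 / (2 * F t) * (deriv Y0 t * (2 * s)) + W2 t) / F t)
        ((C ^ 3 * py (py u) (t, x, y)
          - C ^ 3 * deriv (deriv T) t / (18 * deriv T t) * (6 * y)
          - C ^ 3 / (2 * F t) * (deriv Y0 t * 2)) / F t) y :=
      ((((((hasDerivAt_slice_y (hu1.differentiable (by simp)) t x y).const_mul (C ^ 3)).sub
        (((hasDerivAt_pow 2 y).const_mul 3).const_mul
          (C ^ 3 * deriv (deriv T) t / (18 * deriv T t)))).sub
        ((((hasDerivAt_id y).const_mul 2).const_mul (deriv Y0 t)).const_mul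
          (C ^ 3 / (2 * F t)))).add_const (W2 t)).div_const (F t)).congr_val
        (by push_cast; ring)
    have h2 : F t * py (py ut) (T t, F t * x + X0 t, F t * y + Y0 t) =
        (C ^ 3 * py (py u) (t, x, y)
          - C ^ 3 * deriv (deriv T) t / (18 * deriv T t) * (6 * y)
          - C ^ 3 / (2 * F t) * (deriv Y0 t * 2)) / F t := by
      rw [← hch]; exact hD.deriv
    exact step_div1 (hFne t) h2
  -- u_xx
  have hc2x : ∀ t x y : ℝ,
      px (px ut) (T t, F t * x + X0 t, F t * y + Y0 t) =
      (C ^ 3 * px (px u) (t, x, y) - C ^ 3 * deriv (deriv T) t / (18 * deriv T t) * (6 * x)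
        - C ^ 3 / (2 * F t) * (deriv X0 t * 2)) / F t ^ 2 := by
    intro t x y
    have hch := chain_x T F X0 Y0 (hvx.differentiable (by simp))
      (fun p => (C ^ 3 * px u p
        - C ^ 3 * deriv (deriv T) p.1 / (18 * deriv T p.1) * (3 * p.2.1 ^ 2)
        - C ^ 3 / (2 * F p.1) * (deriv X0 p.1 * (2 * p.2.1)) + W1 p.1) / F p.1)
      (fun a b c => hc1x a b c) t x y
    have hD : HasDerivAt (fun s => (C ^ 3 * px u (t, s, y)
        - C ^ 3 * deriv (deriv T) t / (18 * deriv T t) * (3 * s ^ 2)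
        - C ^ 3 / (2 * F t) * (deriv X0 t * (2 * s)) + W1 t) / F t)
        ((C ^ 3 * px (px u) (t, x, y)
          - C ^ 3 * deriv (deriv T) t / (18 * deriv T t) * (6 * x)
          - C ^ 3 / (2 * F t) * (deriv X0 t * 2)) / F t) x :=
      ((((((hasDerivAt_slice_x (hux.differentiable (by simp)) t x y).const_mul (C ^ 3)).sub
        (((hasDerivAt_pow 2 x).const_mul 3).const_mul
          (C ^ 3 * deriv (deriv T) t / (18 * deriv T t)))).sub
        ((((hasDerivAt_id x).const_mul 2).const_mul (deriv X0 t)).const_mul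
          (C ^ 3 / (2 * F t)))).add_const (W1 t)).div_const (F t)).congr_val
        (by push_cast; ring)
    have h2 : F t * px (px ut) (T t, F t * x + X0 t, F t * y + Y0 t) =
        (C ^ 3 * px (px u) (t, x, y)
          - C ^ 3 * deriv (deriv T) t / (18 * deriv T t) * (6 * x)
          - C ^ 3 / (2 * F t) * (deriv X0 t * 2)) / F t := by
      rw [← hch]; exact hD.deriv
    exact step_div1 (hFne t) h2
  -- u_xxx
  have hc3x : ∀ t x y : ℝ,
      px (px (px ut)) (T t, F t * x + X0 t, F t * y + Y0 t) =
      (C ^ 3 * px (px (px u)) (t, x, y)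
        - C ^ 3 * deriv (deriv T) t / (18 * deriv T t) * 6) / F t ^ 3 := by
    intro t x y
    have hch := chain_x T F X0 Y0 (hvxx.differentiable (by simp))
      (fun p => (C ^ 3 * px (px u) p
        - C ^ 3 * deriv (deriv T) p.1 / (18 * deriv T p.1) * (6 * p.2.1)
        - C ^ 3 / (2 * F p.1) * (deriv X0 p.1 * 2)) / F p.1 ^ 2)
      (fun a b c => hc2x a b c) t x y
    have hD : HasDerivAt (fun s => (C ^ 3 * px (px u) (t, s, y)
        - C ^ 3 * deriv (deriv T) t / (18 * deriv T t) * (6 * s)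
        - C ^ 3 / (2 * F t) * (deriv X0 t * 2)) / F t ^ 2)
        ((C ^ 3 * px (px (px u)) (t, x, y)
          - C ^ 3 * deriv (deriv T) t / (18 * deriv T t) * 6) / F t ^ 2) x :=
      (((((hasDerivAt_slice_x (huxx.differentiable (by simp)) t x y).const_mul (C ^ 3)).sub
        (((hasDerivAt_id x).const_mul 6).const_mul
          (C ^ 3 * deriv (deriv T) t / (18 * deriv T t)))).sub_const _).div_const
        (F t ^ 2)).congr_val (by push_cast; ring)
    have h2 : F t * px (px (px ut)) (T t, F t * x + X0 t, F t * y + Y0 t) =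
        (C ^ 3 * px (px (px u)) (t, x, y)
          - C ^ 3 * deriv (deriv T) t / (18 * deriv T t) * 6) / F t ^ 2 := by
      rw [← hch]; exact hD.deriv
    exact step_div2 (hFne t) h2
  -- u_xxy
  have hc4 : ∀ t x y : ℝ,
      px (px (py ut)) (T t, F t * x + X0 t, F t * y + Y0 t) =
      C ^ 3 * px (px (py u)) (t, x, y) / F t ^ 3 := by
    intro t x y
    have hch := chain_x T F X0 Y0 (hv2.differentiable (by simp))
      (fun p => C ^ 3 * px (py u) p / F p.1 ^ 2) (fun a b c => hc2 a b c) t x y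
    have hD : HasDerivAt (fun s => C ^ 3 * px (py u) (t, s, y) / F t ^ 2)
        (C ^ 3 * px (px (py u)) (t, x, y) / F t ^ 2) x :=
      ((hasDerivAt_slice_x (hu2.differentiable (by simp)) t x y).const_mul
        (C ^ 3)).div_const (F t ^ 2)
    have h2 : F t * px (px (py ut)) (T t, F t * x + X0 t, F t * y + Y0 t) =
        C ^ 3 * px (px (py u)) (t, x, y) / F t ^ 2 := by
      rw [← hch]; exact hD.deriv
    exact step_div2 (hFne t) h2
  -- (u_xy)_y  (order y-x-y)
  have hc5 : ∀ t x y : ℝ,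
      py (px (py ut)) (T t, F t * x + X0 t, F t * y + Y0 t) =
      C ^ 3 * py (px (py u)) (t, x, y) / F t ^ 3 := by
    intro t x y
    have hch := chain_y T F X0 Y0 (hv2.differentiable (by simp))
      (fun p => C ^ 3 * px (py u) p / F p.1 ^ 2) (fun a b c => hc2 a b c) t x y
    have hD : HasDerivAt (fun s => C ^ 3 * px (py u) (t, x, s) / F t ^ 2)
        (C ^ 3 * py (px (py u)) (t, x, y) / F t ^ 2) y :=
      ((hasDerivAt_slice_y (hu2.differentiable (by simp)) t x y).const_mul
        (C ^ 3)).div_const (F t ^ 2)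
    have h2 : F t * py (px (py ut)) (T t, F t * x + X0 t, F t * y + Y0 t) =
        C ^ 3 * py (px (py u)) (t, x, y) / F t ^ 2 := by
      rw [← hch]; exact hD.deriv
    exact step_div2 (hFne t) h2
  -- u_xyy
  have hc6 : ∀ t x y : ℝ,
      px (py (py ut)) (T t, F t * x + X0 t, F t * y + Y0 t) =
      C ^ 3 * px (py (py u)) (t, x, y) / F t ^ 3 := by
    intro t x y
    have hch := chain_x T F X0 Y0 (hv3.differentiable (by simp))
      (fun p => (C ^ 3 * py (py u) p
        - C ^ 3 * deriv (deriv T) p.1 / (18 * deriv T p.1) * (6 * p.2.2)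
        - C ^ 3 / (2 * F p.1) * (deriv Y0 p.1 * 2)) / F p.1 ^ 2)
      (fun a b c => hc3 a b c) t x y
    have hD : HasDerivAt (fun s => (C ^ 3 * py (py u) (t, s, y)
        - C ^ 3 * deriv (deriv T) t / (18 * deriv T t) * (6 * y)
        - C ^ 3 / (2 * F t) * (deriv Y0 t * 2)) / F t ^ 2)
        (C ^ 3 * px (py (py u)) (t, x, y) / F t ^ 2) x :=
      ((((hasDerivAt_slice_x (hu3.differentiable (by simp)) t x y).const_mul
        (C ^ 3)).sub_const _).sub_const _).div_const (F t ^ 2)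
    have h2 : F t * px (py (py ut)) (T t, F t * x + X0 t, F t * y + Y0 t) =
        C ^ 3 * px (py (py u)) (t, x, y) / F t ^ 2 := by
      rw [← hch]; exact hD.deriv
    exact step_div2 (hFne t) h2
  -- u_yyy
  have hc7 : ∀ t x y : ℝ,
      py (py (py ut)) (T t, F t * x + X0 t, F t * y + Y0 t) =
      (C ^ 3 * py (py (py u)) (t, x, y)
        - C ^ 3 * deriv (deriv T) t / (18 * deriv T t) * 6) / F t ^ 3 := by
    intro t x y
    have hch := chain_y T F X0 Y0 (hv3.differentiable (by simp))
      (fun p => (C ^ 3 * py (py u) p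
        - C ^ 3 * deriv (deriv T) p.1 / (18 * deriv T p.1) * (6 * p.2.2)
        - C ^ 3 / (2 * F p.1) * (deriv Y0 p.1 * 2)) / F p.1 ^ 2)
      (fun a b c => hc3 a b c) t x y
    have hD : HasDerivAt (fun s => (C ^ 3 * py (py u) (t, x, s)
        - C ^ 3 * deriv (deriv T) t / (18 * deriv T t) * (6 * s)
        - C ^ 3 / (2 * F t) * (deriv Y0 t * 2)) / F t ^ 2)
        ((C ^ 3 * py (py (py u)) (t, x, y)
          - C ^ 3 * deriv (deriv T) t / (18 * deriv T t) * 6) / F t ^ 2) y :=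
      (((((hasDerivAt_slice_y (hu3.differentiable (by simp)) t x y).const_mul (C ^ 3)).sub
        (((hasDerivAt_id y).const_mul 6).const_mul
          (C ^ 3 * deriv (deriv T) t / (18 * deriv T t)))).sub_const _).div_const
        (F t ^ 2)).congr_val (by push_cast; ring)
    have h2 : F t * py (py (py ut)) (T t, F t * x + X0 t, F t * y + Y0 t) =
        (C ^ 3 * py (py (py u)) (t, x, y)
          - C ^ 3 * deriv (deriv T) t / (18 * deriv T t) * 6) / F t ^ 2 := by
      rw [← hch]; exact hD.deriv
    exact step_div2 (hFne t) h2
  -- u_txy via t-chain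
  have hc8 : ∀ t x y : ℝ,
      pt (px (py ut)) (T t, F t * x + X0 t, F t * y + Y0 t) =
      ((C ^ 3 * pt (px (py u)) (t, x, y) * F t ^ 2
          - C ^ 3 * px (py u) (t, x, y) * (2 * F t * deriv F t)) / F t ^ 4
        - (deriv F t * x + deriv X0 t) * (C ^ 3 * px (px (py u)) (t, x, y) / F t ^ 3)
        - (deriv F t * y + deriv Y0 t) * (C ^ 3 * py (px (py u)) (t, x, y) / F t ^ 3))
        / deriv T t := by
    intro t x y
    have hch := chain_t T F X0 Y0 hT hF hX0 hY0 (hv2.differentiable (by simp))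
      (fun p => C ^ 3 * px (py u) p / F p.1 ^ 2) (fun a b c => hc2 a b c) t x y
    have hD : HasDerivAt (fun s => C ^ 3 * px (py u) (s, x, y) / F s ^ 2)
        ((C ^ 3 * pt (px (py u)) (t, x, y) * F t ^ 2
          - C ^ 3 * px (py u) (t, x, y) * (2 * F t * deriv F t)) / F t ^ 4) t :=
      ((((hasDerivAt_slice_t (hu2.differentiable (by simp)) t x y).const_mul (C ^ 3)).div
        ((hF.differentiable (by simp) t).hasDerivAt.pow 2)
        (pow_ne_zero 2 (hFne t))).congr_val (by push_cast [Pi.pow_apply]; ring))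
    have h3 : pt (fun p => C ^ 3 * px (py u) p / F p.1 ^ 2) (t, x, y) =
        (C ^ 3 * pt (px (py u)) (t, x, y) * F t ^ 2
          - C ^ 3 * px (py u) (t, x, y) * (2 * F t * deriv F t)) / F t ^ 4 := hD.deriv
    rw [h3, hc4 t x y, hc5 t x y] at hch
    rw [eq_div_iff (hT' t)]
    linear_combination -hch
  -- product terms
  have hcP1 : ∀ t x y : ℝ,
      px (fun q => px (px ut) q * px (py ut) q) (T t, F t * x + X0 t, F t * y + Y0 t) =
      (((C ^ 3 * px (px (px u)) (t, x, y)
          - C ^ 3 * deriv (deriv T) t / (18 * deriv T t) * 6) / F t ^ 2) *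
            (C ^ 3 * px (py u) (t, x, y) / F t ^ 2)
        + ((C ^ 3 * px (px u) (t, x, y)
          - C ^ 3 * deriv (deriv T) t / (18 * deriv T t) * (6 * x)
          - C ^ 3 / (2 * F t) * (deriv X0 t * 2)) / F t ^ 2) *
            (C ^ 3 * px (px (py u)) (t, x, y) / F t ^ 2)) / F t := by
    intro t x y
    have hch := chain_x T F X0 Y0 ((hvxx.mul hv2).differentiable (by simp))
      (fun p => ((C ^ 3 * px (px u) p
          - C ^ 3 * deriv (deriv T) p.1 / (18 * deriv T p.1) * (6 * p.2.1)
          - C ^ 3 / (2 * F p.1) * (deriv X0 p.1 * 2)) / F p.1 ^ 2) *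
        (C ^ 3 * px (py u) p / F p.1 ^ 2))
      (fun a b c => by rw [hc2x a b c, hc2 a b c]) t x y
    have hD1 : HasDerivAt (fun s => (C ^ 3 * px (px u) (t, s, y)
        - C ^ 3 * deriv (deriv T) t / (18 * deriv T t) * (6 * s)
        - C ^ 3 / (2 * F t) * (deriv X0 t * 2)) / F t ^ 2)
        ((C ^ 3 * px (px (px u)) (t, x, y)
          - C ^ 3 * deriv (deriv T) t / (18 * deriv T t) * 6) / F t ^ 2) x :=
      (((((hasDerivAt_slice_x (huxx.differentiable (by simp)) t x y).const_mul (C ^ 3)).sub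
        (((hasDerivAt_id x).const_mul 6).const_mul
          (C ^ 3 * deriv (deriv T) t / (18 * deriv T t)))).sub_const _).div_const
        (F t ^ 2)).congr_val (by push_cast; ring)
    have hD2 : HasDerivAt (fun s => C ^ 3 * px (py u) (t, s, y) / F t ^ 2)
        (C ^ 3 * px (px (py u)) (t, x, y) / F t ^ 2) x :=
      ((hasDerivAt_slice_x (hu2.differentiable (by simp)) t x y).const_mul
        (C ^ 3)).div_const (F t ^ 2)
    have hD := (hD1.mul hD2).congr_val (rfl)
    rw [eq_div_iff (hFne t)]
    have h2 : F t * px (fun q => px (px ut) q * px (py ut) q)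
        (T t, F t * x + X0 t, F t * y + Y0 t) =
        ((C ^ 3 * px (px (px u)) (t, x, y)
          - C ^ 3 * deriv (deriv T) t / (18 * deriv T t) * 6) / F t ^ 2) *
            (C ^ 3 * px (py u) (t, x, y) / F t ^ 2)
        + ((C ^ 3 * px (px u) (t, x, y)
          - C ^ 3 * deriv (deriv T) t / (18 * deriv T t) * (6 * x)
          - C ^ 3 / (2 * F t) * (deriv X0 t * 2)) / F t ^ 2) *
            (C ^ 3 * px (px (py u)) (t, x, y) / F t ^ 2) := by
      rw [← hch]; exact hD.deriv
    linear_combination h2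
  have hcP2 : ∀ t x y : ℝ,
      py (fun q => px (py ut) q * py (py ut) q) (T t, F t * x + X0 t, F t * y + Y0 t) =
      ((C ^ 3 * py (px (py u)) (t, x, y) / F t ^ 2) *
          ((C ^ 3 * py (py u) (t, x, y)
            - C ^ 3 * deriv (deriv T) t / (18 * deriv T t) * (6 * y)
            - C ^ 3 / (2 * F t) * (deriv Y0 t * 2)) / F t ^ 2)
        + (C ^ 3 * px (py u) (t, x, y) / F t ^ 2) *
          ((C ^ 3 * py (py (py u)) (t, x, y)
            - C ^ 3 * deriv (deriv T) t / (18 * deriv T t) * 6) / F t ^ 2)) / F t := by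
    intro t x y
    have hch := chain_y T F X0 Y0 ((hv2.mul hv3).differentiable (by simp))
      (fun p => (C ^ 3 * px (py u) p / F p.1 ^ 2) *
        ((C ^ 3 * py (py u) p
          - C ^ 3 * deriv (deriv T) p.1 / (18 * deriv T p.1) * (6 * p.2.2)
          - C ^ 3 / (2 * F p.1) * (deriv Y0 p.1 * 2)) / F p.1 ^ 2))
      (fun a b c => by rw [hc2 a b c, hc3 a b c]) t x y
    have hD1 : HasDerivAt (fun s => C ^ 3 * px (py u) (t, x, s) / F t ^ 2)
        (C ^ 3 * py (px (py u)) (t, x, y) / F t ^ 2) y :=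
      ((hasDerivAt_slice_y (hu2.differentiable (by simp)) t x y).const_mul
        (C ^ 3)).div_const (F t ^ 2)
    have hD2 : HasDerivAt (fun s => (C ^ 3 * py (py u) (t, x, s)
        - C ^ 3 * deriv (deriv T) t / (18 * deriv T t) * (6 * s)
        - C ^ 3 / (2 * F t) * (deriv Y0 t * 2)) / F t ^ 2)
        ((C ^ 3 * py (py (py u)) (t, x, y)
          - C ^ 3 * deriv (deriv T) t / (18 * deriv T t) * 6) / F t ^ 2) y :=
      (((((hasDerivAt_slice_y (hu3.differentiable (by simp)) t x y).const_mul (C ^ 3)).sub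
        (((hasDerivAt_id y).const_mul 6).const_mul
          (C ^ 3 * deriv (deriv T) t / (18 * deriv T t)))).sub_const _).div_const
        (F t ^ 2)).congr_val (by push_cast; ring)
    have hD := hD1.mul hD2
    rw [eq_div_iff (hFne t)]
    have h2 : F t * py (fun q => px (py ut) q * py (py ut) q)
        (T t, F t * x + X0 t, F t * y + Y0 t) =
        (C ^ 3 * py (px (py u)) (t, x, y) / F t ^ 2) *
          ((C ^ 3 * py (py u) (t, x, y)
            - C ^ 3 * deriv (deriv T) t / (18 * deriv T t) * (6 * y)
            - C ^ 3 / (2 * F t) * (deriv Y0 t * 2)) / F t ^ 2)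
        + (C ^ 3 * px (py u) (t, x, y) / F t ^ 2) *
          ((C ^ 3 * py (py (py u)) (t, x, y)
            - C ^ 3 * deriv (deriv T) t / (18 * deriv T t) * 6) / F t ^ 2) := by
      rw [← hch]; exact hD.deriv
    linear_combination h2
  -- u-side product expansions
  have huP1 : ∀ t x y : ℝ, px (fun q => px (px u) q * px (py u) q) (t, x, y) =
      px (px (px u)) (t, x, y) * px (py u) (t, x, y)
        + px (px u) (t, x, y) * px (px (py u)) (t, x, y) := by
    intro t x y
    exact ((hasDerivAt_slice_x (huxx.differentiable (by simp)) t x y).mul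
      (hasDerivAt_slice_x (hu2.differentiable (by simp)) t x y)).deriv
  have huP2 : ∀ t x y : ℝ, py (fun q => px (py u) q * py (py u) q) (t, x, y) =
      py (px (py u)) (t, x, y) * py (py u) (t, x, y)
        + px (py u) (t, x, y) * py (py (py u)) (t, x, y) := by
    intro t x y
    exact ((hasDerivAt_slice_y (hu2.differentiable (by simp)) t x y).mul
      (hasDerivAt_slice_y (hu3.differentiable (by simp)) t x y)).deriv
  constructor
  · intro p
    obtain ⟨t, x, y, hq⟩ := hsurj p
    rw [← hq, hc6 t x y]
    exact div_ne_zero (mul_ne_zero hC3 (huxyy (t, x, y))) (pow_ne_zero _ (hFne t))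
  · intro q
    obtain ⟨t, x, y, hq⟩ := hsurj q
    rw [← hq]
    have harg1 : ((C ^ 3 * px (px (px u)) (t, x, y)
          - C ^ 3 * deriv (deriv T) t / (18 * deriv T t) * 6) / F t ^ 3
        - (C ^ 3 * py (py (py u)) (t, x, y)
          - C ^ 3 * deriv (deriv T) t / (18 * deriv T t) * 6) / F t ^ 3)
        / (C ^ 3 * px (py (py u)) (t, x, y) / F t ^ 3) =
        (px (px (px u)) (t, x, y) - py (py (py u)) (t, x, y)) / px (py (py u)) (t, x, y) := by
      rw [div_sub_div_same]
      field_simp [hFne t, hC, huxyy (t, x, y)]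
      ring
    have harg2 : (C ^ 3 * px (px (py u)) (t, x, y) / F t ^ 3)
        / (C ^ 3 * px (py (py u)) (t, x, y) / F t ^ 3) =
        px (px (py u)) (t, x, y) / px (py (py u)) (t, x, y) := by
      field_simp [hFne t, hC, huxyy (t, x, y)]
    have hueqp := hueq (t, x, y)
    rw [huP1 t x y, huP2 t x y] at hueqp
    rw [hc8 t x y, hcP1 t x y, hcP2 t x y, hc2 t x y, hc6 t x y, hc3x t x y, hc7 t x y,
      hc4 t x y, harg1, harg2, hueqp]
    have e1 : deriv T t = F t ^ 3 / C ^ 3 := by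
      rw [eq_div_iff hC3]; linear_combination - hF3 t
    have e2 : deriv (deriv T) t = 3 * F t ^ 2 * deriv F t / C ^ 3 := by
      rw [eq_div_iff hC3]; linear_combination - hFderiv t
    rw [e2, e1]
    generalize H ((px (px (px u)) (t, x, y) - py (py (py u)) (t, x, y)) / px (py (py u)) (t, x, y),
      px (px (py u)) (t, x, y) / px (py (py u)) (t, x, y)) = Hv
    have hFt : F t ≠ 0 := hFne t
    field_simp
    ring
end

section
/- Let H : ℝ² → ℝ be smooth and satisfy H(ω₁, ω₂) = ω₂·H(−ω₁/ω₂, 1/ω₂) for all ω₁ ∈ ℝ and all ω₂ ≠ 0. If u : ℝ³ → ℝ is a smooth function with u_{xyy} and u_{xxy} nowhere zero that satisfies the H-deformed equation at every point of ℝ³, then the function ũ(t,x,y) = u(t,y,x) has ũ_{xyy} nowhere zero and satisfies the H-deformed equation at every point of ℝ³. -/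
-- px as fderiv
lemma px_eq (v : ℝ × ℝ × ℝ → ℝ) (hv : Differentiable ℝ v) (p : ℝ × ℝ × ℝ) :
    px v p = fderiv ℝ v p ((0:ℝ),(1:ℝ),(0:ℝ)) := by
  have hline : HasDerivAt (fun s : ℝ => ((p.1, s, p.2.2) : ℝ × ℝ × ℝ))
      ((0:ℝ),(1:ℝ),(0:ℝ)) p.2.1 :=
    HasDerivAt.prodMk (hasDerivAt_const _ _) (HasDerivAt.prodMk (hasDerivAt_id _) (hasDerivAt_const _ _))
  have := ((hv (p.1, p.2.1, p.2.2)).hasFDerivAt.comp_hasDerivAt p.2.1 hline)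
  simpa [px, Function.comp_def] using this.deriv

lemma py_eq (v : ℝ × ℝ × ℝ → ℝ) (hv : Differentiable ℝ v) (p : ℝ × ℝ × ℝ) :
    py v p = fderiv ℝ v p ((0:ℝ),(0:ℝ),(1:ℝ)) := by
  have hline : HasDerivAt (fun s : ℝ => ((p.1, p.2.1, s) : ℝ × ℝ × ℝ))
      ((0:ℝ),(0:ℝ),(1:ℝ)) p.2.2 :=
    HasDerivAt.prodMk (hasDerivAt_const _ _) (HasDerivAt.prodMk (hasDerivAt_const _ _) (hasDerivAt_id _))
  have := ((hv (p.1, p.2.1, p.2.2)).hasFDerivAt.comp_hasDerivAt p.2.2 hline)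
  simpa [py, Function.comp_def] using this.deriv

lemma contDiff_px_s11 {v : ℝ × ℝ × ℝ → ℝ} (hv : ContDiff ℝ (⊤ : ℕ∞) v) : ContDiff ℝ (⊤ : ℕ∞) (px v) := by
  have h1 : ContDiff ℝ (⊤ : ℕ∞) (fderiv ℝ v) := hv.fderiv_right (by simp)
  have h2 : ContDiff ℝ (⊤ : ℕ∞) (fun p => fderiv ℝ v p ((0:ℝ),(1:ℝ),(0:ℝ))) :=
    (ContinuousLinearMap.apply ℝ ℝ ((0:ℝ),(1:ℝ),(0:ℝ))).contDiff.comp h1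
  have : px v = fun p => fderiv ℝ v p ((0:ℝ),(1:ℝ),(0:ℝ)) :=
    funext fun p => px_eq v (hv.differentiable (by simp)) p
  rw [this]; exact h2

lemma contDiff_py_s11 {v : ℝ × ℝ × ℝ → ℝ} (hv : ContDiff ℝ (⊤ : ℕ∞) v) : ContDiff ℝ (⊤ : ℕ∞) (py v) := by
  have h1 : ContDiff ℝ (⊤ : ℕ∞) (fderiv ℝ v) := hv.fderiv_right (by simp)
  have h2 : ContDiff ℝ (⊤ : ℕ∞) (fun p => fderiv ℝ v p ((0:ℝ),(0:ℝ),(1:ℝ))) :=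
    (ContinuousLinearMap.apply ℝ ℝ ((0:ℝ),(0:ℝ),(1:ℝ))).contDiff.comp h1
  have : py v = fun p => fderiv ℝ v p ((0:ℝ),(0:ℝ),(1:ℝ)) :=
    funext fun p => py_eq v (hv.differentiable (by simp)) p
  rw [this]; exact h2

lemma clairaut {v : ℝ × ℝ × ℝ → ℝ} (hv : ContDiff ℝ (⊤ : ℕ∞) v) : px (py v) = py (px v) := by
  have hd : Differentiable ℝ v := hv.differentiable (by simp)
  have h1 : ContDiff ℝ (⊤ : ℕ∞) (fderiv ℝ v) := hv.fderiv_right (by simp)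
  have hd1 : Differentiable ℝ (fderiv ℝ v) := h1.differentiable (by simp)
  funext p
  set ex : ℝ × ℝ × ℝ := ((0:ℝ),(1:ℝ),(0:ℝ))
  set ey : ℝ × ℝ × ℝ := ((0:ℝ),(0:ℝ),(1:ℝ))
  set f'' := fderiv ℝ (fderiv ℝ v) p with hf''
  have hsnd : HasFDerivAt (fderiv ℝ v) f'' p := (hd1 p).hasFDerivAt
  have happ : ∀ w : ℝ × ℝ × ℝ,
      fderiv ℝ (fun q => fderiv ℝ v q w) p = (ContinuousLinearMap.apply ℝ ℝ w).comp f'' := by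
    intro w
    exact ((ContinuousLinearMap.apply ℝ ℝ w).hasFDerivAt.comp p hsnd).fderiv
  have hsym : f'' ex ey = f'' ey ex :=
    second_derivative_symmetric (fun y => (hd y).hasFDerivAt) hsnd ex ey
  have e1 : px (py v) p = f'' ex ey := by
    rw [show py v = fun q => fderiv ℝ v q ey from funext fun q => py_eq v hd q]
    have hdy : Differentiable ℝ (fun q => fderiv ℝ v q ey) :=
      fun q => ((ContinuousLinearMap.apply ℝ ℝ ey).differentiableAt).comp q (hd1 q)
    rw [px_eq _ hdy p, happ ey]
    rfl
  have e2 : py (px v) p = f'' ey ex := by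
    rw [show px v = fun q => fderiv ℝ v q ex from funext fun q => px_eq v hd q]
    have hdx : Differentiable ℝ (fun q => fderiv ℝ v q ex) :=
      fun q => ((ContinuousLinearMap.apply ℝ ℝ ex).differentiableAt).comp q (hd1 q)
    rw [py_eq _ hdx p, happ ex]
    rfl
  rw [e1, e2, hsym]

theorem HDeformed_swap_symmetry (H : ℝ × ℝ → ℝ) (hH : ContDiff ℝ (⊤ : ℕ∞) H)
    (hHsym : ∀ ω1 ω2 : ℝ, ω2 ≠ 0 → H (ω1, ω2) = ω2 * H (-ω1 / ω2, 1 / ω2))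
    (u : ℝ × ℝ × ℝ → ℝ) (hu : ContDiff ℝ (⊤ : ℕ∞) u)
    (huxyy : ∀ p : ℝ × ℝ × ℝ, px (py (py u)) p ≠ 0)
    (huxxy : ∀ p : ℝ × ℝ × ℝ, px (px (py u)) p ≠ 0)
    (hueq : SatisfiesHDeformed H u) :
    (∀ p : ℝ × ℝ × ℝ, px (py (py (fun q => u (q.1, q.2.2, q.2.1)))) p ≠ 0) ∧
    SatisfiesHDeformed H (fun q => u (q.1, q.2.2, q.2.1)) := by
  have hpxu := contDiff_px_s11 hu
  have hpyu := contDiff_py_s11 hu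
  have hA : px (py u) = py (px u) := clairaut hu
  have C1 : py (px (px u)) = px (px (py u)) :=
    (clairaut hpxu).symm.trans (congrArg px hA.symm)
  have C2 : py (py (px u)) = px (py (py u)) :=
    (congrArg py hA.symm).trans (clairaut hpyu).symm
  constructor
  · intro p
    have e : px (py (py (fun q => u (q.1, q.2.2, q.2.1)))) p
        = py (px (px u)) (p.1, p.2.2, p.2.1) := rfl
    rw [e, C1]; exact huxxy _
  · intro p
    set q : ℝ × ℝ × ℝ := (p.1, p.2.2, p.2.1) with hqdef
    show pt (py (px u)) q =
      py (fun r => py (py u) r * py (px u) r) q +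
      px (fun r => py (px u) r * px (px u) r) q +
      py (px u) q * py (px (px u)) q *
        H ((py (py (py u)) q - px (px (px u)) q) / py (px (px u)) q,
           py (py (px u)) q / py (px (px u)) q)
    rw [C2, C1, ← hA]
    have m1 : (fun r => py (py u) r * px (py u) r) = (fun r => px (py u) r * py (py u) r) :=
      funext fun r => mul_comm _ _
    have m2 : (fun r => px (py u) r * px (px u) r) = (fun r => px (px u) r * px (py u) r) :=
      funext fun r => mul_comm _ _
    rw [m1, m2, hueq q]
    have hc := huxyy q
    have hd := huxxy q
    set X := px (py u) q
    set a := px (px (px u)) q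
    set b := py (py (py u)) q
    set c := px (py (py u)) q
    set d := px (px (py u)) q
    rw [hHsym _ _ (div_ne_zero hd hc)]
    have h1 : -((a - b) / c) / (d / c) = (b - a) / d := by field_simp; ring
    have h2 : (1 : ℝ) / (d / c) = c / d := one_div_div _ _
    rw [h1, h2]
    have h3 : X * c * (d / c * H ((b - a) / d, c / d)) = X * d * H ((b - a) / d, c / d) := by
      field_simp
    rw [h3]; ring
end

section
/- For all real constants a, b, c and every smooth function u : ℝ³ → ℝ of the variables (t,x,y), the following identity holds at every point of ℝ³: u_{txy} − (u_{xx}u_{xy})_x − (u_{xy}u_{yy})_y − u_{xy}·(a(u_{xxx} − u_{yyy}) + b·u_{xxy} + c·u_{xyy}) = ∂_t(u_{xy}) − ∂_x((1+a)·u_{xx}u_{xy} + (a/2)·u_{yy}² + (b/2)·u_{xy}²) − ∂_y((1−a)·u_{xy}u_{yy} − (a/2)·u_{xx}² + (c/2)·u_{xy}²). In particular, every equation of the form u_{txy} = (u_{xx}u_{xy})_x + (u_{xy}u_{yy})_y + u_{xy}(a(u_{xxx}−u_{yyy}) + b·u_{xxy} + c·u_{xyy}) is in conserved form, i.e. admits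 the conservation-law characteristic 1. -/
noncomputable def D (v : ℝ × ℝ × ℝ) (u : ℝ × ℝ × ℝ → ℝ) : ℝ × ℝ × ℝ → ℝ :=
  fun p => fderiv ℝ u p v

lemma D_smooth {u : ℝ × ℝ × ℝ → ℝ} (hu : ContDiff ℝ (⊤ : ℕ∞) u) (v : ℝ × ℝ × ℝ) :
    ContDiff ℝ (⊤ : ℕ∞) (D v u) :=
  (hu.fderiv_right (by simp)).clm_apply contDiff_const

lemma pt_eq {u : ℝ × ℝ × ℝ → ℝ} (hu : ContDiff ℝ (⊤ : ℕ∞) u) : pt u = D ((1:ℝ),(0:ℝ),(0:ℝ)) u := by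
  funext p
  have hφ : HasDerivAt (fun s : ℝ => ((s, p.2.1, p.2.2) : ℝ × ℝ × ℝ)) (1, 0, 0) p.1 :=
    (hasDerivAt_id p.1).prodMk ((hasDerivAt_const p.1 p.2.1).prodMk (hasDerivAt_const p.1 p.2.2))
  exact ((hu.differentiable (by simp) (p.1, p.2.1, p.2.2)).hasFDerivAt.comp_hasDerivAt p.1 hφ).deriv

lemma px_eq_s12 {u : ℝ × ℝ × ℝ → ℝ} (hu : ContDiff ℝ (⊤ : ℕ∞) u) : px u = D ((0:ℝ),(1:ℝ),(0:ℝ)) u := by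
  funext p
  have hφ : HasDerivAt (fun s : ℝ => ((p.1, s, p.2.2) : ℝ × ℝ × ℝ)) (0, 1, 0) p.2.1 :=
    (hasDerivAt_const p.2.1 p.1).prodMk ((hasDerivAt_id p.2.1).prodMk (hasDerivAt_const p.2.1 p.2.2))
  exact ((hu.differentiable (by simp) (p.1, p.2.1, p.2.2)).hasFDerivAt.comp_hasDerivAt p.2.1 hφ).deriv

lemma py_eq_s12 {u : ℝ × ℝ × ℝ → ℝ} (hu : ContDiff ℝ (⊤ : ℕ∞) u) : py u = D ((0:ℝ),(0:ℝ),(1:ℝ)) u := by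
  funext p
  have hφ : HasDerivAt (fun s : ℝ => ((p.1, p.2.1, s) : ℝ × ℝ × ℝ)) (0, 0, 1) p.2.2 :=
    (hasDerivAt_const p.2.2 p.1).prodMk ((hasDerivAt_const p.2.2 p.2.1).prodMk (hasDerivAt_id p.2.2))
  exact ((hu.differentiable (by simp) (p.1, p.2.1, p.2.2)).hasFDerivAt.comp_hasDerivAt p.2.2 hφ).deriv

lemma D_comm {u : ℝ × ℝ × ℝ → ℝ} (hu : ContDiff ℝ (⊤ : ℕ∞) u) (v w : ℝ × ℝ × ℝ) :
    D v (D w u) = D w (D v u) := by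
  funext p
  have key : ∀ v w : ℝ × ℝ × ℝ, D v (D w u) p = fderiv ℝ (fderiv ℝ u) p v w := by
    intro v w
    have hdf : DifferentiableAt ℝ (fderiv ℝ u) p :=
      ((hu.fderiv_right (m := (⊤ : ℕ∞)) (by simp)).differentiable (by simp)) p
    have h := fderiv_clm_apply hdf (differentiableAt_const w)
    have h2 : D v (D w u) p = (fderiv ℝ (fun y => (fderiv ℝ u y) w) p) v := rfl
    rw [h2, h]
    simp
  rw [key, key]
  exact second_derivative_symmetric (fun y => (hu.differentiable (by simp) y).hasFDerivAt)
    (((hu.fderiv_right (m := (⊤ : ℕ∞)) (by simp)).differentiable (by simp) p).hasFDerivAt) v w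

lemma D_mul {f g : ℝ × ℝ × ℝ → ℝ} (hf : ContDiff ℝ (⊤ : ℕ∞) f) (hg : ContDiff ℝ (⊤ : ℕ∞) g)
    (v : ℝ × ℝ × ℝ) (p : ℝ × ℝ × ℝ) :
    D v (fun q => f q * g q) p = D v f p * g p + f p * D v g p := by
  have H := ((hf.differentiable (by simp) p).hasFDerivAt.mul
    (hg.differentiable (by simp) p).hasFDerivAt)
  simp only [D, H.fderiv]
  erw [H.fderiv]
  simp [smul_eq_mul]
  ring

lemma D_comb {f g h k : ℝ × ℝ × ℝ → ℝ} (hf : ContDiff ℝ (⊤ : ℕ∞) f) (hg : ContDiff ℝ (⊤ : ℕ∞) g)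
    (hh : ContDiff ℝ (⊤ : ℕ∞) h) (hk : ContDiff ℝ (⊤ : ℕ∞) k) (c1 c2 c3 : ℝ)
    (v : ℝ × ℝ × ℝ) (p : ℝ × ℝ × ℝ) :
    D v (fun q => c1 * (f q * g q) + c2 * (h q * h q) + c3 * (k q * k q)) p
      = c1 * (D v f p * g p + f p * D v g p) + c2 * (2 * h p * D v h p)
        + c3 * (2 * k p * D v k p) := by
  have hf' := (hf.differentiable (by simp) p).hasFDerivAt
  have hg' := (hg.differentiable (by simp) p).hasFDerivAt
  have hh' := (hh.differentiable (by simp) p).hasFDerivAt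
  have hk' := (hk.differentiable (by simp) p).hasFDerivAt
  have H := (((hf'.mul hg').const_mul c1).add ((hh'.mul hh').const_mul c2)).add
    ((hk'.mul hk').const_mul c3)
  simp only [D, H.fderiv]
  erw [H.fderiv]
  simp [smul_eq_mul]
  ring

theorem conserved_form_identity (a b c : ℝ) (u : ℝ × ℝ × ℝ → ℝ) (hu : ContDiff ℝ (⊤ : ℕ∞) u) :
    ∀ p : ℝ × ℝ × ℝ,
      pt (px (py u)) p
        - px (fun q => px (px u) q * px (py u) q) p
        - py (fun q => px (py u) q * py (py u) q) p
        - px (py u) p *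
            (a * (px (px (px u)) p - py (py (py u)) p)
              + b * px (px (py u)) p + c * px (py (py u)) p)
      = pt (fun q => px (py u) q) p
        - px (fun q => (1 + a) * (px (px u) q * px (py u) q)
            + a / 2 * (py (py u) q) ^ 2 + b / 2 * (px (py u) q) ^ 2) p
        - py (fun q => (1 - a) * (px (py u) q * py (py u) q)
            - a / 2 * (px (px u) q) ^ 2 + c / 2 * (px (py u) q) ^ 2) p := by
  intro p
  have s2 : ContDiff ℝ (⊤ : ℕ∞) (D ((0:ℝ),(1:ℝ),(0:ℝ)) u) := D_smooth hu _
  have s3 : ContDiff ℝ (⊤ : ℕ∞) (D ((0:ℝ),(0:ℝ),(1:ℝ)) u) := D_smooth hu _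
  have s22 : ContDiff ℝ (⊤ : ℕ∞) (D ((0:ℝ),(1:ℝ),(0:ℝ)) (D ((0:ℝ),(1:ℝ),(0:ℝ)) u)) := D_smooth s2 _
  have s23 : ContDiff ℝ (⊤ : ℕ∞) (D ((0:ℝ),(1:ℝ),(0:ℝ)) (D ((0:ℝ),(0:ℝ),(1:ℝ)) u)) := D_smooth s3 _
  have s33 : ContDiff ℝ (⊤ : ℕ∞) (D ((0:ℝ),(0:ℝ),(1:ℝ)) (D ((0:ℝ),(0:ℝ),(1:ℝ)) u)) := D_smooth s3 _
  have hpx : px u = D ((0:ℝ),(1:ℝ),(0:ℝ)) u := px_eq_s12 hu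
  have hpy : py u = D ((0:ℝ),(0:ℝ),(1:ℝ)) u := py_eq_s12 hu
  have hpx2 : px (D ((0:ℝ),(1:ℝ),(0:ℝ)) u) = D ((0:ℝ),(1:ℝ),(0:ℝ)) (D ((0:ℝ),(1:ℝ),(0:ℝ)) u) := px_eq_s12 s2
  have hpx3 : px (D ((0:ℝ),(0:ℝ),(1:ℝ)) u) = D ((0:ℝ),(1:ℝ),(0:ℝ)) (D ((0:ℝ),(0:ℝ),(1:ℝ)) u) := px_eq_s12 s3
  have hpy3 : py (D ((0:ℝ),(0:ℝ),(1:ℝ)) u) = D ((0:ℝ),(0:ℝ),(1:ℝ)) (D ((0:ℝ),(0:ℝ),(1:ℝ)) u) := py_eq_s12 s3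
  have hpt23 : pt (D ((0:ℝ),(1:ℝ),(0:ℝ)) (D ((0:ℝ),(0:ℝ),(1:ℝ)) u))
      = D ((1:ℝ),(0:ℝ),(0:ℝ)) (D ((0:ℝ),(1:ℝ),(0:ℝ)) (D ((0:ℝ),(0:ℝ),(1:ℝ)) u)) := pt_eq s23
  have hpx22 : px (D ((0:ℝ),(1:ℝ),(0:ℝ)) (D ((0:ℝ),(1:ℝ),(0:ℝ)) u))
      = D ((0:ℝ),(1:ℝ),(0:ℝ)) (D ((0:ℝ),(1:ℝ),(0:ℝ)) (D ((0:ℝ),(1:ℝ),(0:ℝ)) u)) := px_eq_s12 s22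
  have hpx23 : px (D ((0:ℝ),(1:ℝ),(0:ℝ)) (D ((0:ℝ),(0:ℝ),(1:ℝ)) u))
      = D ((0:ℝ),(1:ℝ),(0:ℝ)) (D ((0:ℝ),(1:ℝ),(0:ℝ)) (D ((0:ℝ),(0:ℝ),(1:ℝ)) u)) := px_eq_s12 s23
  have hpx33 : px (D ((0:ℝ),(0:ℝ),(1:ℝ)) (D ((0:ℝ),(0:ℝ),(1:ℝ)) u))
      = D ((0:ℝ),(1:ℝ),(0:ℝ)) (D ((0:ℝ),(0:ℝ),(1:ℝ)) (D ((0:ℝ),(0:ℝ),(1:ℝ)) u)) := px_eq_s12 s33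
  have hpy33 : py (D ((0:ℝ),(0:ℝ),(1:ℝ)) (D ((0:ℝ),(0:ℝ),(1:ℝ)) u))
      = D ((0:ℝ),(0:ℝ),(1:ℝ)) (D ((0:ℝ),(0:ℝ),(1:ℝ)) (D ((0:ℝ),(0:ℝ),(1:ℝ)) u)) := py_eq_s12 s33
  simp only [hpx, hpy, hpx2, hpx3, hpy3, hpt23, hpx22, hpx23, hpx33, hpy33]
  -- rewrite the bracket functions into canonical form
  rw [show (fun q => (1 + a) * (D ((0:ℝ),(1:ℝ),(0:ℝ)) (D ((0:ℝ),(1:ℝ),(0:ℝ)) u) q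
          * D ((0:ℝ),(1:ℝ),(0:ℝ)) (D ((0:ℝ),(0:ℝ),(1:ℝ)) u) q)
        + a / 2 * (D ((0:ℝ),(0:ℝ),(1:ℝ)) (D ((0:ℝ),(0:ℝ),(1:ℝ)) u) q) ^ 2
        + b / 2 * (D ((0:ℝ),(1:ℝ),(0:ℝ)) (D ((0:ℝ),(0:ℝ),(1:ℝ)) u) q) ^ 2)
      = (fun q => (1 + a) * (D ((0:ℝ),(1:ℝ),(0:ℝ)) (D ((0:ℝ),(1:ℝ),(0:ℝ)) u) q
          * D ((0:ℝ),(1:ℝ),(0:ℝ)) (D ((0:ℝ),(0:ℝ),(1:ℝ)) u) q)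
        + (a / 2) * (D ((0:ℝ),(0:ℝ),(1:ℝ)) (D ((0:ℝ),(0:ℝ),(1:ℝ)) u) q
          * D ((0:ℝ),(0:ℝ),(1:ℝ)) (D ((0:ℝ),(0:ℝ),(1:ℝ)) u) q)
        + (b / 2) * (D ((0:ℝ),(1:ℝ),(0:ℝ)) (D ((0:ℝ),(0:ℝ),(1:ℝ)) u) q
          * D ((0:ℝ),(1:ℝ),(0:ℝ)) (D ((0:ℝ),(0:ℝ),(1:ℝ)) u) q))
      from funext fun q => by ring]
  rw [show (fun q => (1 - a) * (D ((0:ℝ),(1:ℝ),(0:ℝ)) (D ((0:ℝ),(0:ℝ),(1:ℝ)) u) q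
          * D ((0:ℝ),(0:ℝ),(1:ℝ)) (D ((0:ℝ),(0:ℝ),(1:ℝ)) u) q)
        - a / 2 * (D ((0:ℝ),(1:ℝ),(0:ℝ)) (D ((0:ℝ),(1:ℝ),(0:ℝ)) u) q) ^ 2
        + c / 2 * (D ((0:ℝ),(1:ℝ),(0:ℝ)) (D ((0:ℝ),(0:ℝ),(1:ℝ)) u) q) ^ 2)
      = (fun q => (1 - a) * (D ((0:ℝ),(1:ℝ),(0:ℝ)) (D ((0:ℝ),(0:ℝ),(1:ℝ)) u) q
          * D ((0:ℝ),(0:ℝ),(1:ℝ)) (D ((0:ℝ),(0:ℝ),(1:ℝ)) u) q)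
        + (-(a / 2)) * (D ((0:ℝ),(1:ℝ),(0:ℝ)) (D ((0:ℝ),(1:ℝ),(0:ℝ)) u) q
          * D ((0:ℝ),(1:ℝ),(0:ℝ)) (D ((0:ℝ),(1:ℝ),(0:ℝ)) u) q)
        + (c / 2) * (D ((0:ℝ),(1:ℝ),(0:ℝ)) (D ((0:ℝ),(0:ℝ),(1:ℝ)) u) q
          * D ((0:ℝ),(1:ℝ),(0:ℝ)) (D ((0:ℝ),(0:ℝ),(1:ℝ)) u) q))
      from funext fun q => by ring]
  rw [px_eq_s12 (s22.mul s23), py_eq_s12 (s23.mul s33),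
    px_eq_s12 (((contDiff_const.mul (s22.mul s23)).add (contDiff_const.mul (s33.mul s33))).add
      (contDiff_const.mul (s23.mul s23))),
    py_eq_s12 (((contDiff_const.mul (s23.mul s33)).add (contDiff_const.mul (s22.mul s22))).add
      (contDiff_const.mul (s23.mul s23)))]
  rw [D_mul s22 s23, D_mul s23 s33,
    D_comb s22 s23 s33 s23 (1 + a) (a / 2) (b / 2),
    D_comb s23 s33 s22 s23 (1 - a) (-(a / 2)) (c / 2)]
  have hc1 : D ((0:ℝ),(0:ℝ),(1:ℝ)) (D ((0:ℝ),(1:ℝ),(0:ℝ)) (D ((0:ℝ),(0:ℝ),(1:ℝ)) u))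
      = D ((0:ℝ),(1:ℝ),(0:ℝ)) (D ((0:ℝ),(0:ℝ),(1:ℝ)) (D ((0:ℝ),(0:ℝ),(1:ℝ)) u)) :=
    D_comm s3 _ _
  have hc2 : D ((0:ℝ),(0:ℝ),(1:ℝ)) (D ((0:ℝ),(1:ℝ),(0:ℝ)) (D ((0:ℝ),(1:ℝ),(0:ℝ)) u))
      = D ((0:ℝ),(1:ℝ),(0:ℝ)) (D ((0:ℝ),(1:ℝ),(0:ℝ)) (D ((0:ℝ),(0:ℝ),(1:ℝ)) u)) :=
    (D_comm s2 _ _).trans (congrArg (D ((0:ℝ),(1:ℝ),(0:ℝ))) (D_comm hu _ _))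
  simp only [hc1, hc2]
  ring
end
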